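/- arXiv:2508.13424 — 12 statements merged into one kernel-verified Lean document; each statement's English description precedes it below -/
import Mathlib

section
/- A graph G is Maya-Tupi if and only if its vertex set can be partitioned into four (possibly empty) sets S, M, Mbar, K such that S is independent, G[M] has maximum degree at most 1 (M induces a matching), G[Mbar] is a complete graph minus a perfect matching (every vertex of G[Mbar] has degree exactly |Mbar|-2 in G[Mbar]), K is a clique, there are no edges between S and M, and every vertex of K is adjacent to every vertex of Mbar. -/
open scoped Classical

/-- Number of neighbours of `v` inside the set `S`. -/
noncomputable def adjCount {V : Type*} (G : SimpleGraph V) (S : Finset V) (v : V) : ℕ :=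
  (S.filter (fun u => G.Adj v u)).card

/-- A graph is Maya-Tupi if its vertex set splits into `A` with min degree `≥ |A| - 2`
inside `A`, and `B` with max degree `≤ 1` inside `B`. -/
def IsMayaTupi {V : Type*} [Fintype V] (G : SimpleGraph V) : Prop :=
  ∃ A B : Finset V, A ∪ B = Finset.univ ∧ Disjoint A B ∧
    (∀ v ∈ A, A.card - 2 ≤ adjCount G A v) ∧
    (∀ v ∈ B, adjCount G B v ≤ 1)
/-- MT-partition `(K, Mb, S, M)`: `S` independent, `M` induces a matching, `Mb` induces a
complete graph minus a perfect matching, `K` a clique, `S` anticomplete to `M`, and `K`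
complete to `Mb`. -/
def IsMTPartition {V : Type*} [Fintype V] (G : SimpleGraph V) (K Mb S M : Finset V) : Prop :=
  K ∪ Mb ∪ S ∪ M = Finset.univ ∧
  Disjoint K Mb ∧ Disjoint K S ∧ Disjoint K M ∧ Disjoint Mb S ∧ Disjoint Mb M ∧ Disjoint S M ∧
  (∀ a ∈ S, ∀ b ∈ S, ¬ G.Adj a b) ∧
  (∀ v ∈ M, adjCount G M v ≤ 1) ∧
  (∀ v ∈ Mb, adjCount G Mb v = Mb.card - 2) ∧
  (∀ a ∈ K, ∀ b ∈ K, a ≠ b → G.Adj a b) ∧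
  (∀ a ∈ S, ∀ b ∈ M, ¬ G.Adj a b) ∧
  (∀ a ∈ K, ∀ b ∈ Mb, G.Adj a b)

lemma adjCount_card_split {V : Type*} (G : SimpleGraph V) (A : Finset V) (v : V)
    (hv : v ∈ A) :
    A.card = adjCount G A v + ((A.erase v).filter (fun u => ¬ G.Adj v u)).card + 1 := by
  have h1 : adjCount G A v = ((A.erase v).filter (fun u => G.Adj v u)).card := by
    unfold adjCount
    congr 1
    ext u
    simp only [Finset.mem_filter, Finset.mem_erase]
    constructor
    · rintro ⟨hu, ha⟩; exact ⟨⟨ha.ne', hu⟩, ha⟩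
    · rintro ⟨⟨_, hu⟩, ha⟩; exact ⟨hu, ha⟩
  have h2 : ((A.erase v).filter (fun u => G.Adj v u)).card
      + ((A.erase v).filter (fun u => ¬ G.Adj v u)).card = (A.erase v).card :=
    Finset.card_filter_add_card_filter_not _
  have h3 : (A.erase v).card = A.card - 1 := Finset.card_erase_of_mem hv
  have h4 : 1 ≤ A.card := Finset.card_pos.2 ⟨v, hv⟩
  omega

theorem isMayaTupi_iff_mtPartition {V : Type*} [Fintype V] (G : SimpleGraph V) :
    IsMayaTupi G ↔ ∃ K Mb S M : Finset V, IsMTPartition G K Mb S M := by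
  constructor
  · rintro ⟨A, B, hcov, hdisj, hA, hB⟩
    set K : Finset V := A.filter (fun v => ∀ u ∈ A, u ≠ v → G.Adj v u) with hK
    have hKA : K ⊆ A := Finset.filter_subset _ _
    refine ⟨K, A \ K, ∅, B, ?_, Finset.disjoint_sdiff, Finset.disjoint_empty_right _,
      hdisj.mono_left hKA, Finset.disjoint_empty_right _,
      hdisj.mono_left Finset.sdiff_subset, Finset.disjoint_empty_left _,
      by simp, hB, ?_, ?_, by simp, ?_⟩
    · rw [Finset.union_sdiff_of_subset hKA, Finset.union_empty, hcov]
    · -- Mb degree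
      intro v hv
      have hvA : v ∈ A := (Finset.mem_sdiff.1 hv).1
      have hvK : v ∉ K := (Finset.mem_sdiff.1 hv).2
      simp only [hK, Finset.mem_filter, not_and, not_forall] at hvK
      obtain ⟨u, huA, huv, hnadj⟩ := hvK hvA
      have hsplit := adjCount_card_split G A v hvA
      have hge := hA v hvA
      have hucard : ((A.erase v).filter (fun w => ¬ G.Adj v w)).card ≤ 1 := by omega
      have humem : u ∈ (A.erase v).filter (fun w => ¬ G.Adj v w) := by
        simp [Finset.mem_erase, huA, huv, hnadj]
      have hNeq : (A.erase v).filter (fun w => ¬ G.Adj v w) = {u} := by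
        apply Finset.eq_singleton_iff_unique_mem.2
        refine ⟨humem, fun w hw => ?_⟩
        by_contra hne
        have : 2 ≤ ((A.erase v).filter (fun w => ¬ G.Adj v w)).card := by
          have := Finset.one_lt_card.2 ⟨w, hw, u, humem, hne⟩
          omega
        omega
      have huMb : u ∈ A \ K := by
        refine Finset.mem_sdiff.2 ⟨huA, ?_⟩
        simp only [hK, Finset.mem_filter, not_and, not_forall]
        intro _
        exact ⟨v, hvA, huv.symm, fun h => hnadj h.symm⟩
      have hfilter : (A \ K).filter (fun w => G.Adj v w) = (A \ K) \ {v, u} := by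
        ext w
        simp only [Finset.mem_filter, Finset.mem_sdiff, Finset.mem_insert,
          Finset.mem_singleton, not_or]
        constructor
        · rintro ⟨⟨hwA, hwK⟩, hadj⟩
          exact ⟨⟨hwA, hwK⟩, hadj.ne', fun h => hnadj (h ▸ hadj)⟩
        · rintro ⟨⟨hwA, hwK⟩, hwv, hwu⟩
          refine ⟨⟨hwA, hwK⟩, ?_⟩
          by_contra hno
          have : w ∈ (A.erase v).filter (fun w => ¬ G.Adj v w) := by
            simp [Finset.mem_erase, hwA, hwv, hno]
          rw [hNeq, Finset.mem_singleton] at this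
          exact hwu this
      have hpair : ({v, u} : Finset V) ⊆ (A \ K) := by
        intro w hw
        rcases Finset.mem_insert.1 hw with rfl | hw
        · exact hv
        · rw [Finset.mem_singleton] at hw; exact hw ▸ huMb
      unfold adjCount
      rw [hfilter, Finset.card_sdiff_of_subset hpair, Finset.card_pair (Ne.symm huv)]
    · -- K clique
      intro a ha b hb hne
      exact (Finset.mem_filter.1 ha).2 b (Finset.mem_filter.1 hb).1 hne.symm
    · -- K complete to Mb
      intro a ha b hb
      have hbA : b ∈ A := (Finset.mem_sdiff.1 hb).1
      have hne : b ≠ a := by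
        rintro rfl
        exact (Finset.mem_sdiff.1 hb).2 ha
      exact (Finset.mem_filter.1 ha).2 b hbA hne
  · rintro ⟨K, Mb, S, M, hcov, hKMb, hKS, hKM, hMbS, hMbM, hSM, hSind, hMdeg, hMbdeg, hKcl, hSM2, hKMb2⟩
    refine ⟨K ∪ Mb, S ∪ M, ?_, ?_, ?_, ?_⟩
    · rw [← hcov]; ac_rfl
    · simp only [Finset.disjoint_union_left, Finset.disjoint_union_right]
      tauto
    · intro v hv
      rcases Finset.mem_union.1 hv with hvK | hvMb
      · -- v ∈ K : adjacent to everything else in A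
        have hsub : (K ∪ Mb).erase v ⊆ (K ∪ Mb).filter (fun u => G.Adj v u) := by
          intro u hu
          rw [Finset.mem_erase] at hu
          refine Finset.mem_filter.2 ⟨hu.2, ?_⟩
          rcases Finset.mem_union.1 hu.2 with h | h
          · exact hKcl v hvK u h hu.1.symm
          · exact hKMb2 v hvK u h
        have := Finset.card_le_card hsub
        rw [Finset.card_erase_of_mem hv] at this
        unfold adjCount
        omega
      · -- v ∈ Mb
        have hsub : K ∪ Mb.filter (fun u => G.Adj v u) ⊆ (K ∪ Mb).filter (fun u => G.Adj v u) := by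
          intro u hu
          rcases Finset.mem_union.1 hu with h | h
          · exact Finset.mem_filter.2 ⟨Finset.mem_union_left _ h, (hKMb2 u h v hvMb).symm⟩
          · have := Finset.mem_filter.1 h
            exact Finset.mem_filter.2 ⟨Finset.mem_union_right _ this.1, this.2⟩
        have hdisj2 : Disjoint K (Mb.filter (fun u => G.Adj v u)) :=
          hKMb.mono_right (Finset.filter_subset _ _)
        have hcard := Finset.card_le_card hsub
        rw [Finset.card_union_of_disjoint hdisj2] at hcard
        have h1 : Mb.card - 2 ≤ (Mb.filter (fun u => G.Adj v u)).card := (hMbdeg v hvMb).ge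
        have h2 : (K ∪ Mb).card = K.card + Mb.card := Finset.card_union_of_disjoint hKMb
        have h3 : 1 ≤ Mb.card := Finset.card_pos.2 ⟨v, hvMb⟩
        unfold adjCount
        omega
    · intro v hv
      rcases Finset.mem_union.1 hv with hvS | hvM
      · have : (S ∪ M).filter (fun u => G.Adj v u) = ∅ := by
          apply Finset.filter_eq_empty_iff.2
          intro u hu ha
          rcases Finset.mem_union.1 hu with h | h
          · exact hSind v hvS u h ha
          · exact hSM2 v hvS u h ha
        unfold adjCount
        simp [this]
      · have hsub : (S ∪ M).filter (fun u => G.Adj v u) ⊆ M.filter (fun u => G.Adj v u) := by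
          intro u hu
          have hu' := Finset.mem_filter.1 hu
          rcases Finset.mem_union.1 hu'.1 with h | h
          · exact absurd hu'.2.symm (hSM2 u h v hvM)
          · exact Finset.mem_filter.2 ⟨h, hu'.2⟩
        have := Finset.card_le_card hsub
        have := hMdeg v hvM
        unfold adjCount at *
        omega
end

section
/- If G is a disconnected Maya-Tupi graph, then G has at most two connected components with at least three vertices. -/
open scoped Classical

private lemma two_le_adjCount {V : Type*} (G : SimpleGraph V) (B : Finset V)
    {x u v : V} (hu : u ∈ B) (hv : v ∈ B) (huv : u ≠ v)
    (hxu : G.Adj x u) (hxv : G.Adj x v) : 2 ≤ adjCount G B x := by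
  have h : ({u, v} : Finset V) ⊆ B.filter (fun y => G.Adj x y) := by
    intro y hy
    simp only [Finset.mem_insert, Finset.mem_singleton] at hy
    rcases hy with rfl | rfl <;> simp [Finset.mem_filter, hu, hv, hxu, hxv]
  calc 2 = ({u, v} : Finset V).card := by
        rw [Finset.card_insert_of_notMem (by simp [huv]), Finset.card_singleton]
    _ ≤ _ := Finset.card_le_card h

private lemma walk_bounce {V : Type*} (G : SimpleGraph V) (B : Finset V)
    (hB : ∀ v ∈ B, adjCount G B v ≤ 1) :
    ∀ {v u : V}, G.Walk v u → (∀ x, G.Reachable v x → x ∈ B) → u = v ∨ G.Adj v u := by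
  intro v u p
  induction p with
  | nil => exact fun _ => Or.inl rfl
  | @cons v b u h q ih =>
    intro hsub
    have hsub' : ∀ x, G.Reachable b x → x ∈ B := fun x hx => hsub x (h.reachable.trans hx)
    rcases ih hsub' with rfl | hadj
    · exact Or.inr h
    · by_cases huv : u = v
      · exact Or.inl huv
      · exfalso
        have h2 : 2 ≤ adjCount G B b :=
          two_le_adjCount G B (hsub v (SimpleGraph.Reachable.refl v)) (hsub u ⟨SimpleGraph.Walk.cons h q⟩)
            (fun hh => huv hh.symm) h.symm hadj
        have := hB b (hsub b h.reachable)
        omega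

private lemma no_big_B {V : Type*} [Fintype V] (G : SimpleGraph V) (B : Finset V)
    (hB : ∀ v ∈ B, adjCount G B v ≤ 1) (c : G.ConnectedComponent)
    (hsub : ∀ x ∈ c.supp, x ∈ B) (hcard : 3 ≤ c.supp.ncard) : False := by
  obtain ⟨v, hv, u, hu, w, hw, hvu, hvw, huw⟩ :=
    (Set.two_lt_ncard (Set.toFinite _)).mp (by omega : 2 < c.supp.ncard)
  have hreach : ∀ x, G.Reachable v x → x ∈ B := by
    intro x hx
    apply hsub
    rw [SimpleGraph.ConnectedComponent.mem_supp_iff]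
    rw [← (SimpleGraph.ConnectedComponent.mem_supp_iff c v).mp hv]
    exact (SimpleGraph.ConnectedComponent.sound hx).symm
  have hru : G.Reachable v u := SimpleGraph.ConnectedComponent.exact (by
    rw [(SimpleGraph.ConnectedComponent.mem_supp_iff c v).mp hv,
      (SimpleGraph.ConnectedComponent.mem_supp_iff c u).mp hu])
  have hrw : G.Reachable v w := SimpleGraph.ConnectedComponent.exact (by
    rw [(SimpleGraph.ConnectedComponent.mem_supp_iff c v).mp hv,
      (SimpleGraph.ConnectedComponent.mem_supp_iff c w).mp hw])
  have hadju : G.Adj v u := by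
    rcases hru.elim (fun p => walk_bounce G B hB p hreach) with h | h
    · exact absurd h.symm hvu
    · exact h
  have hadjw : G.Adj v w := by
    rcases hrw.elim (fun p => walk_bounce G B hB p hreach) with h | h
    · exact absurd h.symm hvw
    · exact h
  have h2 : 2 ≤ adjCount G B v :=
    two_le_adjCount G B (hreach v (SimpleGraph.Reachable.refl v) |> fun _ => hreach u hru) (hreach w hrw) huw hadju hadjw
  have := hB v (hreach v (SimpleGraph.Reachable.refl v))
  omega

private lemma A_adj {V : Type*} (G : SimpleGraph V) (A : Finset V)
    (hA : ∀ v ∈ A, A.card - 2 ≤ adjCount G A v)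
    {u v w : V} (hu : u ∈ A) (hv : v ∈ A) (hw : w ∈ A)
    (hvu : v ≠ u) (hwu : w ≠ u) (hvw : v ≠ w) : G.Adj u v ∨ G.Adj u w := by
  by_contra hcon
  push_neg at hcon
  obtain ⟨h1, h2⟩ := hcon
  have hsub3 : ({u, v, w} : Finset V) ⊆ A := by
    intro x hx
    simp only [Finset.mem_insert, Finset.mem_singleton] at hx
    rcases hx with rfl | rfl | rfl <;> assumption
  have hcard3 : ({u, v, w} : Finset V).card = 3 := by
    rw [Finset.card_insert_of_notMem (by simp [hvu.symm, hwu.symm]),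
      Finset.card_insert_of_notMem (by simp [hvw]), Finset.card_singleton]
  have hAcard : 3 ≤ A.card := hcard3 ▸ Finset.card_le_card hsub3
  have hsub : A.filter (fun x => G.Adj u x) ⊆ A \ {u, v, w} := by
    intro x hx
    rw [Finset.mem_filter] at hx
    rw [Finset.mem_sdiff]
    refine ⟨hx.1, ?_⟩
    simp only [Finset.mem_insert, Finset.mem_singleton]
    rintro (rfl | rfl | rfl)
    · exact G.irrefl hx.2
    · exact h1 hx.2
    · exact h2 hx.2
  have hle : adjCount G A u ≤ A.card - 3 := by
    have := Finset.card_le_card hsub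
    rw [Finset.card_sdiff_of_subset hsub3, hcard3] at this
    exact this
  have := hA u hu
  unfold adjCount at *
  omega

theorem disconnected_mayaTupi_at_most_two_big_components {V : Type*} [Fintype V]
    (G : SimpleGraph V) (hdisc : ¬ G.Connected) (hMT : IsMayaTupi G) :
    {c : G.ConnectedComponent | 3 ≤ c.supp.ncard}.ncard ≤ 2 := by
  obtain ⟨A, B, hunion, hdisj, hA, hB⟩ := hMT
  set S := {c : G.ConnectedComponent | 3 ≤ c.supp.ncard} with hS
  -- every big component contains a vertex of A
  have hbig : ∀ c ∈ S, ∃ a, a ∈ A ∧ a ∈ c.supp := by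
    intro c hc
    by_contra hcon
    push_neg at hcon
    apply no_big_B G B hB c _ hc
    intro x hx
    have hxu : x ∈ A ∪ B := hunion ▸ Finset.mem_univ x
    rcases Finset.mem_union.mp hxu with h | h
    · exact absurd hx (hcon x h)
    · exact h
  rcases isEmpty_or_nonempty V with hV | hV
  · have : S = ∅ := by
      ext c
      simp only [Set.mem_empty_iff_false, iff_false]
      intro hc
      obtain ⟨a, _, _⟩ := hbig c hc
      exact hV.elim a
    simp [this]
  · by_cases hAcard : A.card ≤ 2
    · -- inject S into A
      have : S.ncard ≤ (↑A : Set V).ncard := by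
        apply Set.ncard_le_ncard_of_injOn
          (fun c => if h : ∃ a, a ∈ A ∧ a ∈ c.supp then h.choose else Classical.arbitrary V)
        · intro c hc
          simp only [dif_pos (hbig c hc)]
          exact (hbig c hc).choose_spec.1
        · intro c hc c' hc' heq
          simp only [dif_pos (hbig c hc), dif_pos (hbig c' hc')] at heq
          have h1 := (SimpleGraph.ConnectedComponent.mem_supp_iff _ _).mp (hbig c hc).choose_spec.2
          have h2 := (SimpleGraph.ConnectedComponent.mem_supp_iff _ _).mp (hbig c' hc').choose_spec.2
          exact h1.symm.trans ((congrArg G.connectedComponentMk heq).trans h2)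
      rw [Set.ncard_coe_finset] at this
      omega
    · -- A.card ≥ 3 : all vertices of A lie in one component
      push_neg at hAcard
      have hreachA : ∀ a ∈ A, ∀ b ∈ A, G.Reachable a b := by
        intro a ha b hb
        by_cases hab : a = b
        · exact hab ▸ SimpleGraph.Reachable.refl a
        · by_cases hadj : G.Adj a b
          · exact hadj.reachable
          · have hne : (A \ {a, b}).Nonempty := by
              rw [← Finset.card_pos]
              have h1 : A.card - ({a, b} : Finset V).card ≤ (A \ {a, b}).card :=
                Finset.le_card_sdiff _ _
              have h2 : ({a, b} : Finset V).card ≤ 2 :=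
                (Finset.card_insert_le a {b}).trans (by simp)
              omega
            obtain ⟨w, hw⟩ := hne
            rw [Finset.mem_sdiff] at hw
            simp only [Finset.mem_insert, Finset.mem_singleton] at hw
            push_neg at hw
            obtain ⟨hwA, hwa, hwb⟩ := hw
            have h1 : G.Adj a w :=
              (A_adj G A hA ha hb hwA (Ne.symm hab) hwa (Ne.symm hwb)).resolve_left hadj
            have h2 : G.Adj b w :=
              (A_adj G A hA hb ha hwA hab hwb (Ne.symm hwa)).resolve_left (fun h => hadj h.symm)
            exact h1.reachable.trans h2.reachable.symm
      rcases Set.eq_empty_or_nonempty S with hSe | ⟨c0, hc0⟩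
      · simp [hSe]
      · have hsub : S ⊆ {c0} := by
          intro c hc
          obtain ⟨a, haA, hac⟩ := hbig c hc
          obtain ⟨a0, ha0A, hac0⟩ := hbig c0 hc0
          have hr := hreachA a haA a0 ha0A
          rw [Set.mem_singleton_iff]
          rw [← (SimpleGraph.ConnectedComponent.mem_supp_iff c a).mp hac,
            ← (SimpleGraph.ConnectedComponent.mem_supp_iff c0 a0).mp hac0]
          exact SimpleGraph.ConnectedComponent.sound hr
        have := Set.ncard_le_ncard hsub (Set.finite_singleton c0)
        rw [Set.ncard_singleton] at this
        omega
end

section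
/- If G is a Maya-Tupi graph having two connected components each with at least three vertices, then there exist two non-adjacent vertices u and v such that every connected component of G - {u,v} has at most two vertices. -/
open scoped Classical

/-- In a set closed under adjacency where every vertex has at most one neighbour,
any walk from a vertex of the set ends at the start or at a neighbour. -/
lemma walk_aux {W : Type*} (H : SimpleGraph W) (S : Set W)
    (hcl : ∀ ⦃x y : W⦄, x ∈ S → H.Adj x y → y ∈ S)
    (hdeg : ∀ ⦃v a b : W⦄, v ∈ S → H.Adj v a → H.Adj v b → a = b) :
    ∀ {x y : W}, H.Walk x y → x ∈ S → x = y ∨ H.Adj x y := by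
  intro x y w
  induction w with
  | nil => intro _; exact Or.inl rfl
  | @cons u a y h p ih =>
    intro hu
    have ha : a ∈ S := hcl hu h
    rcases ih ha with rfl | hay
    · exact Or.inr h
    · left
      exact (hdeg ha h.symm hay).symm ▸ rfl

lemma comp_small {W : Type*} (H : SimpleGraph W) (S : Set W)
    (hcl : ∀ ⦃x y : W⦄, x ∈ S → H.Adj x y → y ∈ S)
    (hdeg : ∀ ⦃v a b : W⦄, v ∈ S → H.Adj v a → H.Adj v b → a = b)
    (c : H.ConnectedComponent) (hsub : c.supp ⊆ S) (hfin : c.supp.Finite) :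
    c.supp.ncard ≤ 2 := by
  by_contra hlt
  push_neg at hlt
  rw [Set.two_lt_ncard hfin] at hlt
  obtain ⟨a, ha, b, hb, d, hd, hab, had, hbd⟩ := hlt
  have hr1 : H.Reachable a b := by
    rw [SimpleGraph.ConnectedComponent.mem_supp_iff] at ha hb
    exact (SimpleGraph.ConnectedComponent.eq).1 (ha.trans hb.symm)
  have hr2 : H.Reachable a d := by
    rw [SimpleGraph.ConnectedComponent.mem_supp_iff] at ha hd
    exact (SimpleGraph.ConnectedComponent.eq).1 (ha.trans hd.symm)
  have h1 : H.Adj a b := by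
    rcases walk_aux H S hcl hdeg hr1.some (hsub ha) with h | h
    · exact absurd h hab
    · exact h
  have h2 : H.Adj a d := by
    rcases walk_aux H S hcl hdeg hr2.some (hsub ha) with h | h
    · exact absurd h had
    · exact h
  exact hbd (hdeg (hsub ha) h1 h2)

/-- A component whose support lies in `B` (max degree ≤ 1 inside `B`) has at most 2 vertices. -/
lemma comp_in_B_small {V : Type*} [Fintype V] (G : SimpleGraph V) (B : Finset V)
    (hB : ∀ v ∈ B, adjCount G B v ≤ 1)
    (c : G.ConnectedComponent) (hsub : c.supp ⊆ ↑B) : c.supp.ncard ≤ 2 := by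
  refine comp_small G c.supp ?_ ?_ c subset_rfl (Set.toFinite _)
  · intro x y hx hxy
    rw [SimpleGraph.ConnectedComponent.mem_supp_iff] at hx ⊢
    rw [← hx]
    exact SimpleGraph.ConnectedComponent.eq.2 hxy.symm.reachable
  · intro v a b hv hva hvb
    by_contra hab
    have hvB : v ∈ B := hsub hv
    have haS : a ∈ c.supp := by
      rw [SimpleGraph.ConnectedComponent.mem_supp_iff] at hv ⊢
      rw [← hv]; exact SimpleGraph.ConnectedComponent.eq.2 hva.symm.reachable
    have hbS : b ∈ c.supp := by
      rw [SimpleGraph.ConnectedComponent.mem_supp_iff] at hv ⊢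
      rw [← hv]; exact SimpleGraph.ConnectedComponent.eq.2 hvb.symm.reachable
    have hsubf : ({a, b} : Finset V) ⊆ B.filter (fun u => G.Adj v u) := by
      intro x hx
      rcases Finset.mem_insert.1 hx with rfl | hx
      · exact Finset.mem_filter.2 ⟨hsub haS, hva⟩
      · rw [Finset.mem_singleton] at hx
        subst hx
        exact Finset.mem_filter.2 ⟨hsub hbS, hvb⟩
    have : 2 ≤ adjCount G B v := by
      have := Finset.card_le_card hsubf
      rwa [Finset.card_pair hab] at this
    have := hB v hvB
    omega

theorem mayaTupi_two_big_components {V : Type*} [Fintype V] (G : SimpleGraph V)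
    (hMT : IsMayaTupi G) (c₁ c₂ : G.ConnectedComponent) (hne : c₁ ≠ c₂)
    (h₁ : 3 ≤ c₁.supp.ncard) (h₂ : 3 ≤ c₂.supp.ncard) :
    ∃ u v : V, u ≠ v ∧ ¬ G.Adj u v ∧
      ∀ c : (G.induce {w : V | w ≠ u ∧ w ≠ v}).ConnectedComponent, c.supp.ncard ≤ 2 := by
  obtain ⟨A, B, hcover, hdisj, hA, hB⟩ := hMT
  -- a component whose support misses A is small
  have hmiss : ∀ c : G.ConnectedComponent, (∀ a ∈ A, a ∉ c.supp) → c.supp.ncard ≤ 2 := by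
    intro c hc
    refine comp_in_B_small G B hB c ?_
    intro x hx
    have hxu : x ∈ A ∪ B := hcover ▸ Finset.mem_univ x
    rcases Finset.mem_union.1 hxu with hxA | hxB
    · exact absurd hx (hc x hxA)
    · exact hxB
  -- the final conclusion, given that everything outside {u,v} lies in B
  have hfinal : ∀ u v : V, (∀ w : V, w ≠ u → w ≠ v → w ∈ B) →
      ∀ c : (G.induce {w : V | w ≠ u ∧ w ≠ v}).ConnectedComponent, c.supp.ncard ≤ 2 := by
    intro u v hBcov c
    refine comp_small _ Set.univ (fun _ _ _ _ => trivial) ?_ c (fun _ _ => trivial)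
      (Set.toFinite _)
    intro x a b _ hxa hxb
    by_contra hab
    have hxB : x.1 ∈ B := hBcov x.1 x.2.1 x.2.2
    have hab' : a.1 ≠ b.1 := fun h => hab (Subtype.ext h)
    have hsubf : ({a.1, b.1} : Finset V) ⊆ B.filter (fun u' => G.Adj x.1 u') := by
      intro y hy
      rcases Finset.mem_insert.1 hy with rfl | hy
      · exact Finset.mem_filter.2 ⟨hBcov a.1 a.2.1 a.2.2, hxa⟩
      · rw [Finset.mem_singleton] at hy
        subst hy
        exact Finset.mem_filter.2 ⟨hBcov b.1 b.2.1 b.2.2, hxb⟩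
    have h2 : 2 ≤ adjCount G B x.1 := by
      have := Finset.card_le_card hsubf
      rwa [Finset.card_pair hab'] at this
    have := hB x.1 hxB
    omega
  -- A has at most 2 elements
  have hA2 : A.card ≤ 2 := by
    by_contra hA3
    push_neg at hA3
    -- any two vertices of A are reachable from each other
    have hreach : ∀ a ∈ A, ∀ b ∈ A, G.Reachable a b := by
      intro a haA b hbA
      by_cases hab : a = b
      · exact hab ▸ SimpleGraph.Reachable.refl a
      by_cases hadj : G.Adj a b
      · exact hadj.reachable
      -- nonadjacent: find a common neighbour
      have key : ∀ x ∈ A, x ≠ a → x ≠ b → G.Adj a x ∧ G.Adj b x := by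
        intro x hxA hxa hxb
        constructor
        · by_contra hax
          -- N_a ⊆ A \ {a, b, x}
          have hsub : A.filter (fun u => G.Adj a u) ⊆ (A \ {a, b, x}) := by
            intro y hy
            rw [Finset.mem_filter] at hy
            refine Finset.mem_sdiff.2 ⟨hy.1, ?_⟩
            intro hmem
            rcases Finset.mem_insert.1 hmem with rfl | hmem
            · exact G.irrefl hy.2
            rcases Finset.mem_insert.1 hmem with rfl | hmem
            · exact hadj hy.2
            · rw [Finset.mem_singleton] at hmem; subst hmem; exact hax hy.2
          have hsub3 : ({a, b, x} : Finset V) ⊆ A := by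
            intro y hy
            rcases Finset.mem_insert.1 hy with rfl | hy
            · exact haA
            rcases Finset.mem_insert.1 hy with rfl | hy
            · exact hbA
            · rw [Finset.mem_singleton] at hy; subst hy; exact hxA
          have hcard3 : ({a, b, x} : Finset V).card = 3 := by
            rw [Finset.card_insert_of_notMem, Finset.card_insert_of_notMem,
              Finset.card_singleton]
            · simp [Ne.symm hxb]
            · simp [hab, Ne.symm hxa]
          have hle : (A \ {a, b, x}).card = A.card - 3 := by
            rw [Finset.card_sdiff_of_subset hsub3, hcard3]
          have := Finset.card_le_card hsub
          have := hA a haA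
          unfold adjCount at this
          omega
        · by_contra hbx
          have hsub : A.filter (fun u => G.Adj b u) ⊆ (A \ {a, b, x}) := by
            intro y hy
            rw [Finset.mem_filter] at hy
            refine Finset.mem_sdiff.2 ⟨hy.1, ?_⟩
            intro hmem
            rcases Finset.mem_insert.1 hmem with rfl | hmem
            · exact hadj hy.2.symm
            rcases Finset.mem_insert.1 hmem with rfl | hmem
            · exact G.irrefl hy.2
            · rw [Finset.mem_singleton] at hmem; subst hmem; exact hbx hy.2
          have hsub3 : ({a, b, x} : Finset V) ⊆ A := by
            intro y hy
            rcases Finset.mem_insert.1 hy with rfl | hy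
            · exact haA
            rcases Finset.mem_insert.1 hy with rfl | hy
            · exact hbA
            · rw [Finset.mem_singleton] at hy; subst hy; exact hxA
          have hcard3 : ({a, b, x} : Finset V).card = 3 := by
            rw [Finset.card_insert_of_notMem, Finset.card_insert_of_notMem,
              Finset.card_singleton]
            · simp [Ne.symm hxb]
            · simp [hab, Ne.symm hxa]
          have hle : (A \ {a, b, x}).card = A.card - 3 := by
            rw [Finset.card_sdiff_of_subset hsub3, hcard3]
          have := Finset.card_le_card hsub
          have := hA b hbA
          unfold adjCount at this
          omega
      -- a common neighbour exists since |A \ {a,b}| ≥ 1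
      have hne' : ∃ x ∈ A, x ≠ a ∧ x ≠ b := by
        by_contra hno
        push_neg at hno
        have : A ⊆ {a, b} := by
          intro y hy
          by_cases hya : y = a
          · exact Finset.mem_insert.2 (Or.inl hya)
          · exact Finset.mem_insert.2 (Or.inr (Finset.mem_singleton.2 (hno y hy hya)))
        have hsub2 := Finset.card_le_card this
        have hcard2 : ({a, b} : Finset V).card ≤ 2 :=
          (Finset.card_insert_le a {b}).trans (by simp)
        omega
      obtain ⟨x, hxA, hxa, hxb⟩ := hne'
      obtain ⟨h1, h2⟩ := key x hxA hxa hxb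
      exact h1.reachable.trans h2.reachable.symm
    -- all of A lies in one component
    have hAne : A.Nonempty := Finset.card_pos.1 (by omega)
    obtain ⟨a₀, ha₀⟩ := hAne
    set d := G.connectedComponentMk a₀ with hd
    have hAd : ∀ a ∈ A, a ∈ d.supp := by
      intro a haA
      rw [SimpleGraph.ConnectedComponent.mem_supp_iff]
      exact SimpleGraph.ConnectedComponent.eq.2 (hreach a haA a₀ ha₀)
    -- one of c₁, c₂ differs from d
    have : ∃ c : G.ConnectedComponent, c ≠ d ∧ 3 ≤ c.supp.ncard := by
      by_cases h : c₁ = d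
      · exact ⟨c₂, fun hcd => hne (h.trans hcd.symm), h₂⟩
      · exact ⟨c₁, h, h₁⟩
    obtain ⟨c, hcd, hc3⟩ := this
    have : c.supp.ncard ≤ 2 := by
      refine hmiss c ?_
      intro a haA hac
      have := hAd a haA
      rw [SimpleGraph.ConnectedComponent.mem_supp_iff] at this hac
      exact hcd (hac ▸ this ▸ rfl)
    omega
  -- now case on |A|
  by_cases hA2' : A.card = 2
  · obtain ⟨u, v, huv, hAuv⟩ := Finset.card_eq_two.1 hA2'
    have hBcov : ∀ w : V, w ≠ u → w ≠ v → w ∈ B := by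
      intro w hwu hwv
      have hw : w ∈ A ∪ B := hcover ▸ Finset.mem_univ w
      rcases Finset.mem_union.1 hw with hwA | hwB
      · rw [hAuv] at hwA
        rcases Finset.mem_insert.1 hwA with rfl | hwA
        · exact absurd rfl hwu
        · rw [Finset.mem_singleton] at hwA; exact absurd hwA hwv
      · exact hwB
    refine ⟨u, v, huv, ?_, hfinal u v hBcov⟩
    -- u, v are not adjacent
    intro hadj
    set d := G.connectedComponentMk u with hd
    have hvd : v ∈ d.supp := by
      rw [SimpleGraph.ConnectedComponent.mem_supp_iff]
      exact SimpleGraph.ConnectedComponent.eq.2 hadj.symm.reachable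
    have hud : u ∈ d.supp := by
      rw [SimpleGraph.ConnectedComponent.mem_supp_iff]
    have : ∃ c : G.ConnectedComponent, c ≠ d ∧ 3 ≤ c.supp.ncard := by
      by_cases h : c₁ = d
      · exact ⟨c₂, fun hcd => hne (h.trans hcd.symm), h₂⟩
      · exact ⟨c₁, h, h₁⟩
    obtain ⟨c, hcd, hc3⟩ := this
    have : c.supp.ncard ≤ 2 := by
      refine hmiss c ?_
      intro a haA hac
      rw [hAuv] at haA
      have had : a ∈ d.supp := by
        rcases Finset.mem_insert.1 haA with rfl | haA
        · exact hud
        · rw [Finset.mem_singleton] at haA; subst haA; exact hvd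
      rw [SimpleGraph.ConnectedComponent.mem_supp_iff] at had hac
      exact hcd (hac ▸ had ▸ rfl)
    omega
  · -- |A| ≤ 1
    have hA1 : A.card ≤ 1 := by omega
    have hnV : Nonempty V := by
      rcases Set.eq_empty_or_nonempty c₁.supp with h | h
      · rw [h, Set.ncard_empty] at h₁; omega
      · exact ⟨h.choose⟩
    obtain ⟨u, hAu⟩ := Finset.card_le_one_iff_subset_singleton.1 hA1
    set d := G.connectedComponentMk u with hd
    have : ∃ c : G.ConnectedComponent, c ≠ d ∧ 3 ≤ c.supp.ncard := by
      by_cases h : c₁ = d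
      · exact ⟨c₂, fun hcd => hne (h.trans hcd.symm), h₂⟩
      · exact ⟨c₁, h, h₁⟩
    obtain ⟨c, hcd, hc3⟩ := this
    have hcne : c.supp.Nonempty := by
      rcases Set.eq_empty_or_nonempty c.supp with h | h
      · rw [h, Set.ncard_empty] at hc3; omega
      · exact h
    obtain ⟨v, hv⟩ := hcne
    have huc : u ∉ c.supp := by
      intro h
      rw [SimpleGraph.ConnectedComponent.mem_supp_iff] at h
      exact hcd h.symm
    have huv : u ≠ v := fun h => huc (h ▸ hv)
    have hnadj : ¬ G.Adj u v := by
      intro hadj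
      apply huc
      rw [SimpleGraph.ConnectedComponent.mem_supp_iff] at hv ⊢
      rw [← hv]
      exact SimpleGraph.ConnectedComponent.eq.2 hadj.reachable
    refine ⟨u, v, huv, hnadj, hfinal u v ?_⟩
    intro w hwu _
    have hw : w ∈ A ∪ B := hcover ▸ Finset.mem_univ w
    rcases Finset.mem_union.1 hw with hwA | hwB
    · have := hAu hwA
      rw [Finset.mem_singleton] at this
      exact absurd this hwu
    · exact hwB
end

section
/- The disjoint union of three copies of the path P3 is not a Maya-Tupi graph, but every proper induced subgraph of 3P3 is Maya-Tupi. -/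
open scoped Classical

/-- Graph on `Fin n` with the given edge list. -/
def graphOfList (n : ℕ) (l : List (ℕ × ℕ)) : SimpleGraph (Fin n) :=
  SimpleGraph.fromRel (fun a b => ((a : ℕ), (b : ℕ)) ∈ l)

/-- `G` contains no induced subgraph isomorphic to `H`. -/
def Free {α : Type*} {V : Type*} (H : SimpleGraph α) (G : SimpleGraph V) : Prop :=
  IsEmpty (H ↪g G)

def twoP3 : SimpleGraph (Fin 6) := graphOfList 6 [(0,1),(1,2),(3,4),(4,5)]
def p3PlusK3 : SimpleGraph (Fin 6) := graphOfList 6 [(0,1),(1,2),(3,4),(4,5),(3,5)]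
def twoK3 : SimpleGraph (Fin 6) := graphOfList 6 [(0,1),(1,2),(0,2),(3,4),(4,5),(3,5)]
def cycle4 : SimpleGraph (Fin 4) := graphOfList 4 [(0,1),(1,2),(2,3),(3,0)]
def cycle5 : SimpleGraph (Fin 5) := graphOfList 5 [(0,1),(1,2),(2,3),(3,4),(4,0)]
def cycle6 : SimpleGraph (Fin 6) := graphOfList 6 [(0,1),(1,2),(2,3),(3,4),(4,5),(5,0)]

/-- `G` is `{2P3, P3+K3, 2K3, C4, C5, C6}`-free. -/
def FFree {V : Type*} (G : SimpleGraph V) : Prop :=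
  Free twoP3 G ∧ Free p3PlusK3 G ∧ Free twoK3 G ∧ Free cycle4 G ∧ Free cycle5 G ∧ Free cycle6 G

/-- `v1 v2 v3 v4` form an induced `2K2` with edges `v1v2` and `v3v4`. -/
def Induced2K2 {V : Type*} (G : SimpleGraph V) (v1 v2 v3 v4 : V) : Prop :=
  v1 ≠ v2 ∧ v1 ≠ v3 ∧ v1 ≠ v4 ∧ v2 ≠ v3 ∧ v2 ≠ v4 ∧ v3 ≠ v4 ∧
  G.Adj v1 v2 ∧ G.Adj v3 v4 ∧ ¬ G.Adj v1 v3 ∧ ¬ G.Adj v1 v4 ∧ ¬ G.Adj v2 v3 ∧ ¬ G.Adj v2 v4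
def threeP3 : SimpleGraph (Fin 9) := graphOfList 9 [(0,1),(1,2),(3,4),(4,5),(6,7),(7,8)]

instance instDecThreeP3 : DecidableRel threeP3.Adj := fun a b =>
  decidable_of_iff (a ≠ b ∧ ((((a:ℕ),(b:ℕ)) ∈ [(0,1),(1,2),(3,4),(4,5),(6,7),(7,8)]) ∨
    (((b:ℕ),(a:ℕ)) ∈ [(0,1),(1,2),(3,4),(4,5),(6,7),(7,8)]))) Iff.rfl

def cntD (S : Finset (Fin 9)) (v : Fin 9) : ℕ := (S.filter (fun u => threeP3.Adj v u)).card

lemma adjCount_eq_cntD (S : Finset (Fin 9)) (v : Fin 9) : adjCount threeP3 S v = cntD S v := by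
  unfold adjCount cntD; congr

lemma adjCount_mono {V : Type*} (G : SimpleGraph V) {S T : Finset V} (h : S ⊆ T) (v : V) :
    adjCount G S v ≤ adjCount G T v :=
  Finset.card_le_card (Finset.filter_subset_filter _ h)

lemma adjCount_induce {V : Type*} (G : SimpleGraph V) (s : Set V) (S : Finset s) (v : s) :
    adjCount (G.induce s) S v = adjCount G (S.image Subtype.val) v := by
  classical
  unfold adjCount
  rw [← Finset.card_image_of_injective (α := s) _ Subtype.val_injective, Finset.filter_image]
  rfl

lemma helper (s : Finset (Fin 9)) (w : Fin 9) (hw : w ∉ s) (A₀ : Finset (Fin 9))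
    (hA : A₀.card ≤ 2)
    (hB : ∀ v ∈ Finset.univ \ insert w A₀, cntD (Finset.univ \ insert w A₀) v ≤ 1) :
    IsMayaTupi (threeP3.induce (s : Set (Fin 9))) := by
  classical
  refine ⟨Finset.univ.filter (fun v : (s : Set (Fin 9)) => (v : Fin 9) ∈ A₀),
    Finset.univ.filter (fun v : (s : Set (Fin 9)) => ¬ (v : Fin 9) ∈ A₀), ?_, ?_, ?_, ?_⟩
  · ext v
    by_cases h : (v : Fin 9) ∈ A₀ <;> simp [h]
  · rw [Finset.disjoint_left]
    intro a ha hb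
    simp only [Finset.mem_filter] at ha hb
    exact hb.2 ha.2
  · intro v _
    have hsub : (Finset.univ.filter (fun v : (s : Set (Fin 9)) => (v : Fin 9) ∈ A₀)).image
        Subtype.val ⊆ A₀ := by
      intro u hu
      simp only [Finset.mem_image, Finset.mem_filter] at hu
      obtain ⟨x, ⟨-, hx⟩, rfl⟩ := hu
      exact hx
    have hcard : (Finset.univ.filter (fun v : (s : Set (Fin 9)) => (v : Fin 9) ∈ A₀)).card ≤ 2 := by
      calc _ = ((Finset.univ.filter (fun v : (s : Set (Fin 9)) => (v : Fin 9) ∈ A₀)).image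
          Subtype.val).card := (Finset.card_image_of_injective _ Subtype.val_injective).symm
        _ ≤ A₀.card := Finset.card_le_card hsub
        _ ≤ 2 := hA
    omega
  · intro v hv
    simp only [Finset.mem_filter] at hv
    have hvB : (v : Fin 9) ∈ Finset.univ \ insert w A₀ := by
      simp only [Finset.mem_sdiff, Finset.mem_univ, Finset.mem_insert, true_and]
      push_neg
      exact ⟨fun h => hw (h ▸ (v.2 : (v : Fin 9) ∈ s)), hv.2⟩
    rw [adjCount_induce]
    refine le_trans (adjCount_mono threeP3 ?_ _) (by rw [adjCount_eq_cntD]; exact hB _ hvB)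
    intro u hu
    simp only [Finset.mem_image, Finset.mem_filter] at hu
    obtain ⟨x, ⟨-, hx⟩, rfl⟩ := hu
    have hxs : (x : Fin 9) ∈ s := x.2
    simp only [Finset.mem_sdiff, Finset.mem_univ, Finset.mem_insert, true_and]
    push_neg
    exact ⟨fun h => hw (h ▸ hxs), hx⟩

set_option maxHeartbeats 4000000 in
set_option maxRecDepth 10000 in
lemma neg_decide : ¬ ∃ A : Finset (Fin 9),
    (∀ v ∈ A, A.card - 2 ≤ cntD A v) ∧ (∀ v ∈ Aᶜ, cntD Aᶜ v ≤ 1) := by decide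

theorem threeP3_minimal_obstruction :
    ¬ IsMayaTupi threeP3 ∧
      ∀ s : Finset (Fin 9), s ≠ Finset.univ → IsMayaTupi (threeP3.induce (s : Set (Fin 9))) := by
  constructor
  · rintro ⟨A, B, hU, hD, h1, h2⟩
    have hB : B = Aᶜ := by
      ext v
      simp only [Finset.mem_compl]
      constructor
      · intro hv hvA; exact (Finset.disjoint_left.mp hD) hvA hv
      · intro hv
        have hU2 : ∀ u : Fin 9, u ∈ A ∨ u ∈ B := by
          rw [Finset.ext_iff] at hU
          simpa only [Finset.mem_union, Finset.mem_univ, iff_true] using hU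
        rcases hU2 v with h | h
        · exact absurd h hv
        · exact h
    subst hB
    exact neg_decide ⟨A, fun v hv => by rw [← adjCount_eq_cntD]; exact h1 v hv,
      fun v hv => by rw [← adjCount_eq_cntD]; exact h2 v hv⟩
  · intro s hs
    have : ∃ w, w ∉ s := by
      by_contra h
      push_neg at h
      exact hs (Finset.eq_univ_iff_forall.mpr h)
    obtain ⟨w, hw⟩ := this
    fin_cases w
    · exact helper s 0 hw {4, 7} (by decide) (by decide)
    · exact helper s 1 hw {4, 7} (by decide) (by decide)
    · exact helper s 2 hw {4, 7} (by decide) (by decide)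
    · exact helper s 3 hw {1, 7} (by decide) (by decide)
    · exact helper s 4 hw {1, 7} (by decide) (by decide)
    · exact helper s 5 hw {1, 7} (by decide) (by decide)
    · exact helper s 6 hw {1, 4} (by decide) (by decide)
    · exact helper s 7 hw {1, 4} (by decide) (by decide)
    · exact helper s 8 hw {1, 4} (by decide) (by decide)
end

section
/- The disjoint union of three copies of the triangle K3 is not a Maya-Tupi graph, but every proper induced subgraph of 3K3 is Maya-Tupi. -/
open scoped Classical

def threeK3 : SimpleGraph (Fin 9) :=
  graphOfList 9 [(0,1),(1,2),(0,2),(3,4),(4,5),(3,5),(6,7),(7,8),(6,8)]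


set_option maxRecDepth 400000 in
instance threeK3.adjDecidable : DecidableRel threeK3.Adj := fun a b =>
  decidable_of_iff _ (SimpleGraph.fromRel_adj _ a b).symm

/-- Computable adjacency count in `threeK3`. -/
def cnt (S : Finset (Fin 9)) (v : Fin 9) : ℕ := (S.filter (fun u => threeK3.Adj v u)).card

lemma adjCount_eq (S : Finset (Fin 9)) (v : Fin 9) : adjCount threeK3 S v = cnt S v := by
  unfold adjCount cnt; congr!

lemma card_coe' (s T : Finset (Fin 9)) (hT : T ⊆ s) :
    ((Finset.univ : Finset (↑s : Set (Fin 9))).filter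
        (fun v : (↑s : Set (Fin 9)) => (↑v : Fin 9) ∈ T)).card = T.card := by
  apply Finset.card_bij (fun (v : (↑s : Set (Fin 9))) (_ : v ∈ _) => (v : Fin 9))
  · intro v hv
    simpa using hv
  · intro a _ b _ h; exact Subtype.ext h
  · intro x hx
    exact ⟨⟨x, by simpa using hT hx⟩, by simpa using hx, rfl⟩

lemma adjCount_induce_s7 (s T : Finset (Fin 9)) (hT : T ⊆ s) (v : (↑s : Set (Fin 9))) :
    adjCount (threeK3.induce (↑s : Set (Fin 9)))
      ((Finset.univ : Finset (↑s : Set (Fin 9))).filter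
        (fun u : (↑s : Set (Fin 9)) => (↑u : Fin 9) ∈ T)) v = cnt T ↑v := by
  unfold adjCount cnt
  apply Finset.card_bij (fun (u : (↑s : Set (Fin 9))) (_ : u ∈ _) => (u : Fin 9))
  · intro u hu
    simp only [Finset.mem_filter, Finset.mem_univ, true_and] at hu ⊢
    refine ⟨hu.1, ?_⟩
    simpa [SimpleGraph.induce, SimpleGraph.comap_adj] using hu.2
  · intro a _ b _ h; exact Subtype.ext h
  · intro x hx
    simp only [Finset.mem_filter] at hx
    refine ⟨⟨x, by simpa using hT hx.1⟩, ?_, rfl⟩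
    simp only [Finset.mem_filter, Finset.mem_univ, true_and]
    exact ⟨hx.1, by simpa [SimpleGraph.induce, SimpleGraph.comap_adj] using hx.2⟩

lemma induce_mt (s A B : Finset (Fin 9)) (hu : A ∪ B = s) (hd : Disjoint A B)
    (h1 : ∀ v ∈ A, A.card - 2 ≤ cnt A v)
    (h2 : ∀ v ∈ B, cnt B v ≤ 1) :
    IsMayaTupi (threeK3.induce (↑s : Set (Fin 9))) := by
  have hA : A ⊆ s := hu ▸ Finset.subset_union_left
  have hB : B ⊆ s := hu ▸ Finset.subset_union_right
  refine ⟨Finset.univ.filter (fun v : (↑s : Set (Fin 9)) => (↑v : Fin 9) ∈ A),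
    Finset.univ.filter (fun v : (↑s : Set (Fin 9)) => (↑v : Fin 9) ∈ B), ?_, ?_, ?_, ?_⟩
  · ext v
    have hv : (v : Fin 9) ∈ A ∪ B := by rw [hu]; simpa using v.2
    simp only [Finset.mem_union, Finset.mem_filter, Finset.mem_univ, true_and] at hv ⊢
    tauto
  · rw [Finset.disjoint_left]
    intro v hv1 hv2
    simp only [Finset.mem_filter, Finset.mem_univ, true_and] at hv1 hv2
    exact Finset.disjoint_left.mp hd hv1 hv2
  · intro v hv
    rw [card_coe' s A hA, adjCount_induce_s7 s A hA v]
    exact h1 ↑v (by simpa using hv)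
  · intro v hv
    rw [adjCount_induce_s7 s B hB v]
    exact h2 ↑v (by simpa using hv)

/-- One representative from each triangle fully contained in `s`. -/
def repA (s : Finset (Fin 9)) : Finset (Fin 9) :=
  (if ({0,1,2} : Finset (Fin 9)) ⊆ s then {0} else ∅) ∪
  (if ({3,4,5} : Finset (Fin 9)) ⊆ s then {3} else ∅) ∪
  (if ({6,7,8} : Finset (Fin 9)) ⊆ s then {6} else ∅)

set_option maxRecDepth 400000 in
lemma key : ∀ s : Finset (Fin 9), s ≠ Finset.univ →
    repA s ∪ (s \ repA s) = s ∧ Disjoint (repA s) (s \ repA s) ∧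
    (∀ v ∈ repA s, (repA s).card - 2 ≤ cnt (repA s) v) ∧
    (∀ v ∈ s \ repA s, cnt (s \ repA s) v ≤ 1) := by decide

set_option maxRecDepth 400000 in
lemma part1 : ∀ A : Finset (Fin 9),
    ¬((∀ v ∈ A, A.card - 2 ≤ cnt A v) ∧ (∀ v ∈ Aᶜ, cnt Aᶜ v ≤ 1)) := by decide

theorem threeK3_minimal_obstruction :
    ¬ IsMayaTupi threeK3 ∧
      ∀ s : Finset (Fin 9), s ≠ Finset.univ → IsMayaTupi (threeK3.induce (s : Set (Fin 9))) := by
  constructor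
  · rintro ⟨A, B, hu, hd, h1, h2⟩
    have hB : B = Aᶜ := by
      ext v
      simp only [Finset.mem_compl]
      constructor
      · intro hv hvA; exact Finset.disjoint_left.mp hd hvA hv
      · intro hv
        have hvu := Finset.ext_iff.mp hu v
        simp only [Finset.mem_union, Finset.mem_univ, iff_true] at hvu
        rcases hvu with h | h
        · exact absurd h hv
        · exact h
    subst hB
    exact part1 A ⟨fun v hv => adjCount_eq A v ▸ h1 v hv,
      fun v hv => adjCount_eq Aᶜ v ▸ h2 v hv⟩
  · intro s hs
    obtain ⟨hu, hd, h1, h2⟩ := key s hs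
    exact induce_mt s (repA s) (s \ repA s) hu hd h1 h2
end

section
/- If G is a graph obtained from two vertex-disjoint 'nice' graphs G1 and G2 together with any number of isolated vertices and disjoint edges (components K1 and K2), with no edges between the different components, then G is a Maya-Tupi graph. Here a graph is nice if it is obtained from a star by subdividing some edges once and then adding edges from some leaves to the central vertex. -/
open scoped Classical

/-- `S` induces a nice graph in `G`: obtained from a star with center `c` by subdividing
some edges once and then adding edges from some leaves back to the center. Equivalently,
`S \ {c}` has maximum degree at most one inside itself, and every vertex of `S` other than
`c` is adjacent to `c` or to a vertex of `S` adjacent to `c`. -/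
def IsNice {V : Type*} (G : SimpleGraph V) (S : Finset V) : Prop :=
  ∃ c ∈ S, (∀ v ∈ S.erase c, adjCount G (S.erase c) v ≤ 1) ∧
    (∀ v ∈ S, v ≠ c → (G.Adj v c ∨ ∃ w ∈ S, G.Adj v w ∧ G.Adj w c))

theorem nice_union_isMayaTupi {V : Type*} [Fintype V] (G : SimpleGraph V)
    (V₁ V₂ R : Finset V)
    (hunion : V₁ ∪ V₂ ∪ R = Finset.univ)
    (h12 : Disjoint V₁ V₂) (h1R : Disjoint V₁ R) (h2R : Disjoint V₂ R)
    (ha12 : ∀ a ∈ V₁, ∀ b ∈ V₂, ¬ G.Adj a b)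
    (ha1R : ∀ a ∈ V₁, ∀ b ∈ R, ¬ G.Adj a b)
    (ha2R : ∀ a ∈ V₂, ∀ b ∈ R, ¬ G.Adj a b)
    (h1 : IsNice G V₁) (h2 : IsNice G V₂)
    (hR : ∀ v ∈ R, adjCount G R v ≤ 1) :
    IsMayaTupi G := by

  obtain ⟨c₁, hc₁, hdeg₁, -⟩ := h1
  obtain ⟨c₂, hc₂, hdeg₂, -⟩ := h2
  refine ⟨{c₁, c₂}, Finset.univ \ {c₁, c₂}, by simp, Finset.disjoint_sdiff, ?_, ?_⟩
  · intro v hv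
    have : ({c₁, c₂} : Finset V).card ≤ 2 := Finset.card_insert_le _ _ |>.trans (by simp)
    omega
  · intro v hv
    simp only [Finset.mem_sdiff, Finset.mem_univ, Finset.mem_insert, Finset.mem_singleton,
      true_and, not_or] at hv
    obtain ⟨hv1, hv2⟩ := hv
    have hvmem : v ∈ V₁ ∪ V₂ ∪ R := by rw [hunion]; exact Finset.mem_univ v
    have hsub : ∀ (S : Finset V), (∀ u, u ∈ Finset.univ \ {c₁, c₂} → G.Adj v u → u ∈ S) →
        (∀ u ∈ S, adjCount G S u ≤ 1) → v ∈ S → adjCount G (Finset.univ \ {c₁, c₂}) v ≤ 1 := by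
      intro S hall hbound hvS
      refine le_trans (Finset.card_le_card ?_) (hbound v hvS)
      intro u hu
      simp only [Finset.mem_filter] at hu ⊢
      exact ⟨hall u hu.1 hu.2, hu.2⟩
    simp only [Finset.mem_union] at hvmem
    rcases hvmem with (hv | hv) | hv
    · refine hsub (V₁.erase c₁) ?_ hdeg₁ (Finset.mem_erase.2 ⟨hv1, hv⟩)
      intro u hu hadj
      simp only [Finset.mem_sdiff, Finset.mem_univ, Finset.mem_insert, Finset.mem_singleton,
        true_and, not_or] at hu
      have humem : u ∈ V₁ ∪ V₂ ∪ R := by rw [hunion]; exact Finset.mem_univ u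
      simp only [Finset.mem_union] at humem
      rcases humem with (hu' | hu') | hu'
      · exact Finset.mem_erase.2 ⟨hu.1, hu'⟩
      · exact absurd hadj (ha12 v hv u hu')
      · exact absurd hadj (ha1R v hv u hu')
    · refine hsub (V₂.erase c₂) ?_ hdeg₂ (Finset.mem_erase.2 ⟨hv2, hv⟩)
      intro u hu hadj
      simp only [Finset.mem_sdiff, Finset.mem_univ, Finset.mem_insert, Finset.mem_singleton,
        true_and, not_or] at hu
      have humem : u ∈ V₁ ∪ V₂ ∪ R := by rw [hunion]; exact Finset.mem_univ u
      simp only [Finset.mem_union] at humem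
      rcases humem with (hu' | hu') | hu'
      · exact absurd hadj.symm (ha12 u hu' v hv)
      · exact Finset.mem_erase.2 ⟨hu.2, hu'⟩
      · exact absurd hadj (ha2R v hv u hu')
    · refine hsub R ?_ hR hv
      intro u hu hadj
      have humem : u ∈ V₁ ∪ V₂ ∪ R := by rw [hunion]; exact Finset.mem_univ u
      simp only [Finset.mem_union] at humem
      rcases humem with (hu' | hu') | hu'
      · exact absurd hadj.symm (ha1R u hu' v hv)
      · exact absurd hadj.symm (ha2R u hu' v hv)
      · exact hu'
end

section
/- Let G be a {C4, C5}-free graph and C a clique in G. For every pair of adjacent vertices x and y outside C, the neighborhoods of x and y within C are comparable by inclusion: N(x) ∩ C ⊆ N(y) ∩ C or N(y) ∩ C ⊆ N(x) ∩ C. -/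
open scoped Classical

/-! If `a ∈ N(x) ∩ C` is not adjacent to `y` and `b ∈ N(y) ∩ C` is not adjacent to `x`, then
`x a b y` is a 4-cycle whose chords `xb`, `ay` are missing, i.e. an induced `C4`. -/

theorem adj_or_adj_of_free_cycle4 {V : Type*} {G : SimpleGraph V} (h4 : Free cycle4 G)
    {a b c d : V} (hab : G.Adj a b) (hbc : G.Adj b c) (hcd : G.Adj c d) (hda : G.Adj d a)
    (hac : a ≠ c) (hbd : b ≠ d) : G.Adj a c ∨ G.Adj b d := by
  by_contra! ⟨hac', hbd'⟩
  have hca' : ¬G.Adj c a := fun h => hac' h.symm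
  have hdb' : ¬G.Adj d b := fun h => hbd' h.symm
  let f : Fin 4 → V := ![a, b, c, d]
  have hf_inj : Function.Injective f := by
    intro i j
    fin_cases i <;> fin_cases j <;>
      simp [f, hab.ne, hbc.ne, hcd.ne, hda.ne, hac, hbd, hab.ne.symm, hbc.ne.symm, hcd.ne.symm,
        hda.ne.symm, hac.symm, hbd.symm]
  have hf_adj : ∀ i j, G.Adj (f i) (f j) ↔ cycle4.Adj i j := by
    intro i j
    fin_cases i <;> fin_cases j <;>
      simp [f, cycle4, graphOfList, hab, hbc, hcd, hda, hab.symm, hbc.symm, hcd.symm, hda.symm,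
        hac', hbd', hca', hdb']
  exact h4.false ⟨⟨f, hf_inj⟩, hf_adj _ _⟩

theorem clique_neighborhoods_comparable_general {V : Type*} (G : SimpleGraph V)
    (h4 : Free cycle4 G) (C : Set V) (hC : G.IsClique C)
    (x y : V) (hx : x ∉ C) (hy : y ∉ C) (hxy : G.Adj x y) :
    (G.neighborSet x ∩ C ⊆ G.neighborSet y ∩ C) ∨
      (G.neighborSet y ∩ C ⊆ G.neighborSet x ∩ C) := by
  by_contra! ⟨hxy_sub, hyx_sub⟩
  obtain ⟨a, ⟨hxa, haC⟩, hya⟩ := Set.not_subset.mp hxy_sub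
  obtain ⟨b, ⟨hyb, hbC⟩, hxb⟩ := Set.not_subset.mp hyx_sub
  have hab : a ≠ b := by rintro rfl; exact hxb ⟨hxa, haC⟩
  have hxb_ne : x ≠ b := by rintro rfl; exact hx hbC
  have hay_ne : a ≠ y := by rintro rfl; exact hy haC
  rcases adj_or_adj_of_free_cycle4 h4 hxa (hC haC hbC hab) hyb.symm hxy.symm hxb_ne hay_ne with
    h | h
  · exact hxb ⟨h, hbC⟩
  · exact hya ⟨h.symm, haC⟩

theorem clique_neighborhoods_comparable {V : Type*} (G : SimpleGraph V)
    (h4 : Free cycle4 G) (h5 : Free cycle5 G) (C : Set V) (hC : G.IsClique C)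
    (x y : V) (hx : x ∉ C) (hy : y ∉ C) (hxy : G.Adj x y) :
    (G.neighborSet x ∩ C ⊆ G.neighborSet y ∩ C) ∨
      (G.neighborSet y ∩ C ⊆ G.neighborSet x ∩ C) :=
  clique_neighborhoods_comparable_general G h4 C hC x y hx hy hxy
end

section
/- Let G be a {C4, C5}-free graph and C a clique in G. If {x, y, z} is a set of three vertices disjoint from C inducing either a path P3 or a triangle K3, and every vertex of C has a neighbor in {x,y,z}, then at least one of x, y, z is adjacent to every vertex of C. -/
open scoped Classical

/-!
Write `N v` for the set of neighbours of `v` in the clique `C`. In a `C4`-free graph, the sets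
`N p` and `N q` are comparable under inclusion whenever `p` and `q` are adjacent vertices outside
`C`: private neighbours `u ∈ N p \ N q` and `v ∈ N q \ N p` would close the induced 4-cycle
`p u v q`. For an induced path `p m q` the traces `N p, N m` and `N m, N q` are therefore comparable,
and if `N m` lies below both `N p` and `N q`, these two are comparable as well, since otherwise
private neighbours of `p` and `q` yield the induced 5-cycle `p a b q m`. Three sets related in this
way have a largest member, and by the domination hypothesis the largest one is all of `C`.
-/

theorem exists_mem_triple_forall_le {ι α : Type*} [Preorder α] (f : ι → α) {p m q : ι}
    (hpm : f p ≤ f m ∨ f m ≤ f p) (hmq : f m ≤ f q ∨ f q ≤ f m)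
    (hpq : f m ≤ f p → f m ≤ f q → f p ≤ f q ∨ f q ≤ f p) :
    ∃ t ∈ ({p, m, q} : Set ι), ∀ s ∈ ({p, m, q} : Set ι), f s ≤ f t := by
  simp only [Set.mem_insert_iff, Set.mem_singleton_iff, forall_eq_or_imp, forall_eq,
    exists_eq_or_imp, exists_eq_left]
  rcases hpm with hpm | hmp <;> rcases hmq with hmq | hqm
  · exact .inr <| .inr ⟨hpm.trans hmq, hmq, le_rfl⟩
  · exact .inr <| .inl ⟨hpm, le_rfl, hqm⟩
  · rcases hpq hmp hmq with hpq | hqp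
    · exact .inr <| .inr ⟨hpq, hmq, le_rfl⟩
    · exact .inl ⟨le_rfl, hmp, hqp⟩
  · exact .inl ⟨le_rfl, hmp, hqm.trans hmp⟩

theorem Free.false_of_adj_iff {α V : Type*} {H : SimpleGraph α} {G : SimpleGraph V}
    (hH : Free H G) (f : α → V) (hf : Function.Injective f)
    (hadj : ∀ i j, G.Adj (f i) (f j) ↔ H.Adj i j) : False :=
  hH.false ⟨⟨f, hf⟩, hadj _ _⟩

section

variable {V : Type*} {G : SimpleGraph V}

theorem false_of_induced_cycle4 (h4 : Free cycle4 G) {a b c d : V}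
    (hac : a ≠ c) (hbd : b ≠ d)
    (hab : G.Adj a b) (hbc : G.Adj b c) (hcd : G.Adj c d) (hda : G.Adj d a)
    (hnac : ¬ G.Adj a c) (hnbd : ¬ G.Adj b d) : False := by
  refine h4.false_of_adj_iff ![a, b, c, d] ?_ ?_
  · intro i j hij
    fin_cases i <;> fin_cases j <;> simp_all [G.ne_of_adj]
  · intro i j
    fin_cases i <;> fin_cases j <;>
      simp [cycle4, graphOfList, hab, hbc, hcd, hda, hab.symm, hbc.symm, hcd.symm, hda.symm,
        hnac, hnbd, G.adj_comm c a, G.adj_comm d b]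

theorem false_of_induced_cycle5 (h5 : Free cycle5 G) {a b c d e : V}
    (hac : a ≠ c) (had : a ≠ d) (hbd : b ≠ d) (hbe : b ≠ e) (hce : c ≠ e)
    (hab : G.Adj a b) (hbc : G.Adj b c) (hcd : G.Adj c d) (hde : G.Adj d e) (hea : G.Adj e a)
    (hnac : ¬ G.Adj a c) (hnad : ¬ G.Adj a d) (hnbd : ¬ G.Adj b d)
    (hnbe : ¬ G.Adj b e) (hnce : ¬ G.Adj c e) : False := by
  refine h5.false_of_adj_iff ![a, b, c, d, e] ?_ ?_
  · intro i j hij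
    fin_cases i <;> fin_cases j <;> simp_all [G.ne_of_adj]
  · intro i j
    fin_cases i <;> fin_cases j <;>
      simp [cycle5, graphOfList, hab, hbc, hcd, hde, hea, hab.symm, hbc.symm, hcd.symm, hde.symm,
        hea.symm, hnac, hnad, hnbd, hnbe, hnce, G.adj_comm c a, G.adj_comm d a, G.adj_comm d b,
        G.adj_comm e b, G.adj_comm e c]

variable {C : Set V}

theorem neighborSet_inter_subset_or_subset_of_adj (h4 : Free cycle4 G) (hC : G.IsClique C)
    {p q : V} (hpq : G.Adj p q) (hp : p ∉ C) (hq : q ∉ C) :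
    G.neighborSet p ∩ C ⊆ G.neighborSet q ∩ C ∨ G.neighborSet q ∩ C ⊆ G.neighborSet p ∩ C := by
  by_contra! ⟨hpq', hqp'⟩
  obtain ⟨u, ⟨hpu, hu⟩, hqu⟩ := Set.not_subset.mp hpq'
  obtain ⟨v, ⟨hqv, hv⟩, hpv⟩ := Set.not_subset.mp hqp'
  replace hqu : ¬ G.Adj q u := fun h => hqu ⟨h, hu⟩
  replace hpv : ¬ G.Adj p v := fun h => hpv ⟨h, hv⟩
  have huv : u ≠ v := by rintro rfl; exact hqu hqv
  exact false_of_induced_cycle4 h4 (ne_of_mem_of_not_mem hv hp).symm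
    (ne_of_mem_of_not_mem hu hq)
    hpu (hC hu hv huv) hqv.symm hpq.symm hpv (fun h => hqu h.symm)

theorem neighborSet_inter_subset_or_subset_of_path (h4 : Free cycle4 G) (h5 : Free cycle5 G)
    (hC : G.IsClique C) {p m q : V} (hpm : G.Adj p m) (hmq : G.Adj m q)
    (hp : p ∉ C) (hm : m ∉ C) (hq : q ∉ C)
    (hmp' : G.neighborSet m ∩ C ⊆ G.neighborSet p ∩ C)
    (hmq' : G.neighborSet m ∩ C ⊆ G.neighborSet q ∩ C) :
    G.neighborSet p ∩ C ⊆ G.neighborSet q ∩ C ∨ G.neighborSet q ∩ C ⊆ G.neighborSet p ∩ C := by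
  by_cases hpq : G.Adj p q
  · exact neighborSet_inter_subset_or_subset_of_adj h4 hC hpq hp hq
  by_contra! ⟨hpq', hqp'⟩
  obtain ⟨a, ⟨hpa, ha⟩, hqa⟩ := Set.not_subset.mp hpq'
  obtain ⟨b, ⟨hqb, hb⟩, hpb⟩ := Set.not_subset.mp hqp'
  replace hqa : ¬ G.Adj q a := fun h => hqa ⟨h, ha⟩
  replace hpb : ¬ G.Adj p b := fun h => hpb ⟨h, hb⟩
  have hma : ¬ G.Adj m a := fun h => hqa (hmq' ⟨h, ha⟩).1
  have hmb : ¬ G.Adj m b := fun h => hpb (hmp' ⟨h, hb⟩).1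
  have hab : a ≠ b := by rintro rfl; exact hqa hqb
  have hp_ne_q : p ≠ q := by rintro rfl; exact hqa hpa
  exact false_of_induced_cycle5 h5 (ne_of_mem_of_not_mem hb hp).symm hp_ne_q
    (ne_of_mem_of_not_mem ha hq) (ne_of_mem_of_not_mem ha hm) (ne_of_mem_of_not_mem hb hm)
    hpa (hC ha hb hab) hqb.symm hmq.symm hpm.symm
    hpb hpq (fun h => hqa h.symm) (fun h => hma h.symm) (fun h => hmb h.symm)

theorem exists_mem_forall_neighborSet_inter_subset_of_path (h4 : Free cycle4 G)
    (h5 : Free cycle5 G) (hC : G.IsClique C) {p m q : V} (hpm : G.Adj p m) (hmq : G.Adj m q)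
    (hp : p ∉ C) (hm : m ∉ C) (hq : q ∉ C) :
    ∃ t ∈ ({p, m, q} : Set V), ∀ s ∈ ({p, m, q} : Set V),
      G.neighborSet s ∩ C ⊆ G.neighborSet t ∩ C :=
  exists_mem_triple_forall_le (fun s => G.neighborSet s ∩ C)
    (neighborSet_inter_subset_or_subset_of_adj h4 hC hpm hp hm)
    (neighborSet_inter_subset_or_subset_of_adj h4 hC hmq hm hq)
    (neighborSet_inter_subset_or_subset_of_path h4 h5 hC hpm hmq hp hm hq)

end

theorem clique_dominating_triple_general {V : Type*} (G : SimpleGraph V)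
    (h4 : Free cycle4 G) (h5 : Free cycle5 G) (C : Set V) (hC : G.IsClique C)
    (x y z : V)
    (hx : x ∉ C) (hy : y ∉ C) (hz : z ∉ C)
    (hind : (G.Adj x y ∧ G.Adj y z ∧ G.Adj x z) ∨
            (G.Adj x y ∧ G.Adj y z ∧ ¬ G.Adj x z) ∨
            (G.Adj y x ∧ G.Adj x z ∧ ¬ G.Adj y z) ∨
            (G.Adj x z ∧ G.Adj z y ∧ ¬ G.Adj x y))
    (hdom : ∀ c ∈ C, G.Adj c x ∨ G.Adj c y ∨ G.Adj c z) :
    (∀ c ∈ C, G.Adj x c) ∨ (∀ c ∈ C, G.Adj y c) ∨ (∀ c ∈ C, G.Adj z c) := by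
  obtain ⟨t, ht, hmax⟩ : ∃ t ∈ ({x, y, z} : Set V), ∀ s ∈ ({x, y, z} : Set V),
      G.neighborSet s ∩ C ⊆ G.neighborSet t ∩ C := by
    obtain ⟨hxy, hyz⟩ | ⟨hyx, hxz⟩ | ⟨hxz, hzy⟩ :
        (G.Adj x y ∧ G.Adj y z) ∨ (G.Adj y x ∧ G.Adj x z) ∨ (G.Adj x z ∧ G.Adj z y) := by
      tauto
    · exact exists_mem_forall_neighborSet_inter_subset_of_path h4 h5 hC hxy hyz hx hy hz
    · simpa only [Set.insert_comm y x] using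
        exists_mem_forall_neighborSet_inter_subset_of_path h4 h5 hC hyx hxz hy hx hz
    · simpa only [Set.pair_comm z y] using
        exists_mem_forall_neighborSet_inter_subset_of_path h4 h5 hC hxz hzy hx hz hy
  have ht_dom : ∀ c ∈ C, G.Adj t c := by
    intro c hc
    obtain ⟨s, hs, hsc⟩ : ∃ s ∈ ({x, y, z} : Set V), G.Adj s c := by
      simpa [G.adj_comm c] using hdom c hc
    exact (hmax s hs ⟨hsc, hc⟩).1
  rcases ht with rfl | rfl | rfl
  exacts [.inl ht_dom, .inr (.inl ht_dom), .inr (.inr ht_dom)]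

theorem clique_dominating_triple {V : Type*} (G : SimpleGraph V)
    (h4 : Free cycle4 G) (h5 : Free cycle5 G) (C : Set V) (hC : G.IsClique C)
    (x y z : V) (hxy : x ≠ y) (hxz : x ≠ z) (hyz : y ≠ z)
    (hx : x ∉ C) (hy : y ∉ C) (hz : z ∉ C)
    (hind : (G.Adj x y ∧ G.Adj y z ∧ G.Adj x z) ∨
            (G.Adj x y ∧ G.Adj y z ∧ ¬ G.Adj x z) ∨
            (G.Adj y x ∧ G.Adj x z ∧ ¬ G.Adj y z) ∨
            (G.Adj x z ∧ G.Adj z y ∧ ¬ G.Adj x y))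
    (hdom : ∀ c ∈ C, G.Adj c x ∨ G.Adj c y ∨ G.Adj c z) :
    (∀ c ∈ C, G.Adj x c) ∨ (∀ c ∈ C, G.Adj y c) ∨ (∀ c ∈ C, G.Adj z c) :=
  clique_dominating_triple_general G h4 h5 C hC x y z hx hy hz hind hdom
end

section
/- Let G be a graph with no induced subgraph isomorphic to any of 2P3, P3+K3, 2K3, C4, C5, C6, containing an induced copy of 2K2 on vertices {1,2,3,4} with edges 12 and 34. If some vertex x is adjacent to exactly the vertices 1 and 3 among {1,2,3,4}, then no vertex outside {1,2,3,4} is adjacent to exactly {1,4}, exactly {2,3}, exactly {2,4}, exactly {1,2,4}, or exactly {2,3,4} among {1,2,3,4}. -/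
open scoped Classical

/-!
Let `y` have one of the forbidden neighbourhoods in `{v1, v2, v3, v4}`. If `y ~ x`, then `x`, `y`
and an edge of the `2K2` form an induced `C4`; otherwise `x`, `y` and both edges of the `2K2` form
an induced `C5` or `C6`. The symmetry `v1 ↔ v3`, `v2 ↔ v4` fixes `N_{13}` and exchanges `N_{14}`
with `N_{23}` and `N_{124}` with `N_{234}`, so three of the five cases suffice.
-/

namespace Free

variable {V : Type*} {G : SimpleGraph V}

theorem false_of_cycle4 (h : Free cycle4 G) (a b c d : V) (hac : a ≠ c) (hbd : b ≠ d)
    (hab : G.Adj a b) (hbc : G.Adj b c) (hcd : G.Adj c d) (hda : G.Adj d a)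
    (hnac : ¬ G.Adj a c) (hnbd : ¬ G.Adj b d) : False := by
  refine h.false ⟨⟨![a, b, c, d], ?_⟩, ?_⟩
  · simp only [Matrix.vecCons, Fin.cons_injective_iff]
    simp [Function.Injective, hab.ne, hbc.ne, hcd.ne, hda.ne.symm, hac, hbd]
  · intro i j
    fin_cases i <;> fin_cases j <;> simp [cycle4, graphOfList] <;> grind [SimpleGraph.adj_symm]

theorem false_of_cycle5 (h : Free cycle5 G) (a b c d e : V)
    (hac : a ≠ c) (had : a ≠ d) (hbd : b ≠ d) (hbe : b ≠ e) (hce : c ≠ e)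
    (hab : G.Adj a b) (hbc : G.Adj b c) (hcd : G.Adj c d) (hde : G.Adj d e) (hea : G.Adj e a)
    (hnac : ¬ G.Adj a c) (hnad : ¬ G.Adj a d) (hnbd : ¬ G.Adj b d)
    (hnbe : ¬ G.Adj b e) (hnce : ¬ G.Adj c e) : False := by
  refine h.false ⟨⟨![a, b, c, d, e], ?_⟩, ?_⟩
  · simp only [Matrix.vecCons, Fin.cons_injective_iff]
    simp [Function.Injective, hab.ne, hbc.ne, hcd.ne, hde.ne, hea.ne.symm, hac, had, hbd, hbe, hce]
  · intro i j
    fin_cases i <;> fin_cases j <;> simp [cycle5, graphOfList] <;> grind [SimpleGraph.adj_symm]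

theorem false_of_cycle6 (h : Free cycle6 G) (a b c d e f : V)
    (hac : a ≠ c) (had : a ≠ d) (hae : a ≠ e) (hbd : b ≠ d) (hbe : b ≠ e) (hbf : b ≠ f)
    (hce : c ≠ e) (hcf : c ≠ f) (hdf : d ≠ f)
    (hab : G.Adj a b) (hbc : G.Adj b c) (hcd : G.Adj c d) (hde : G.Adj d e)
    (hef : G.Adj e f) (hfa : G.Adj f a)
    (hnac : ¬ G.Adj a c) (hnad : ¬ G.Adj a d) (hnae : ¬ G.Adj a e)
    (hnbd : ¬ G.Adj b d) (hnbe : ¬ G.Adj b e) (hnbf : ¬ G.Adj b f)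
    (hnce : ¬ G.Adj c e) (hncf : ¬ G.Adj c f) (hndf : ¬ G.Adj d f) : False := by
  refine h.false ⟨⟨![a, b, c, d, e, f], ?_⟩, ?_⟩
  · simp only [Matrix.vecCons, Fin.cons_injective_iff]
    simp [Function.Injective, hab.ne, hbc.ne, hcd.ne, hde.ne, hef.ne, hfa.ne.symm,
      hac, had, hae, hbd, hbe, hbf, hce, hcf, hdf]
  · intro i j
    fin_cases i <;> fin_cases j <;> simp [cycle6, graphOfList] <;> grind [SimpleGraph.adj_symm]

end Free

namespace Induced2K2

variable {V : Type*} {G : SimpleGraph V} {v1 v2 v3 v4 x y : V}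

theorem symm (h : Induced2K2 G v1 v2 v3 v4) : Induced2K2 G v3 v4 v1 v2 := by
  obtain ⟨h12, h13, h14, h23, h24, h34, a12, a34, n13, n14, n23, n24⟩ := h
  exact ⟨h34, h13.symm, h23.symm, h14.symm, h24.symm, h12, a34, a12,
    fun h => n13 h.symm, fun h => n23 h.symm, fun h => n14 h.symm, fun h => n24 h.symm⟩

theorem not_exactly_adj_v1_v4 (h : Induced2K2 G v1 v2 v3 v4) (hC4 : Free cycle4 G)
    (hC5 : Free cycle5 G) (hx1 : G.Adj x v1) (hx3 : G.Adj x v3) (hx4 : ¬ G.Adj x v4) :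
    ¬ (G.Adj y v1 ∧ ¬ G.Adj y v2 ∧ ¬ G.Adj y v3 ∧ G.Adj y v4) := by
  rintro ⟨hy1, -, hy3, hy4⟩
  unfold Induced2K2 at h
  by_cases hxy : G.Adj y x
  · apply hC4.false_of_cycle4 y x v3 v4 <;> grind [SimpleGraph.adj_symm]
  · apply hC5.false_of_cycle5 y v1 x v3 v4 <;> grind [SimpleGraph.adj_symm]

theorem not_exactly_adj_v2_v4 (h : Induced2K2 G v1 v2 v3 v4) (hC4 : Free cycle4 G)
    (hC6 : Free cycle6 G) (hx1 : G.Adj x v1) (hx2 : ¬ G.Adj x v2) (hx3 : G.Adj x v3)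
    (hx4 : ¬ G.Adj x v4) :
    ¬ (¬ G.Adj y v1 ∧ G.Adj y v2 ∧ ¬ G.Adj y v3 ∧ G.Adj y v4) := by
  rintro ⟨hy1, hy2, hy3, hy4⟩
  unfold Induced2K2 at h
  by_cases hxy : G.Adj y x
  · apply hC4.false_of_cycle4 x v1 v2 y <;> grind [SimpleGraph.adj_symm]
  · apply hC6.false_of_cycle6 v1 v2 y v4 v3 x <;> grind [SimpleGraph.adj_symm]

theorem not_exactly_adj_v1_v2_v4 (h : Induced2K2 G v1 v2 v3 v4) (hC4 : Free cycle4 G)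
    (hC5 : Free cycle5 G) (hx1 : G.Adj x v1) (hx3 : G.Adj x v3) (hx4 : ¬ G.Adj x v4) :
    ¬ (G.Adj y v1 ∧ G.Adj y v2 ∧ ¬ G.Adj y v3 ∧ G.Adj y v4) := by
  rintro ⟨hy1, -, hy3, hy4⟩
  unfold Induced2K2 at h
  by_cases hxy : G.Adj y x
  · apply hC4.false_of_cycle4 x y v4 v3 <;> grind [SimpleGraph.adj_symm]
  · apply hC5.false_of_cycle5 x v1 y v4 v3 <;> grind [SimpleGraph.adj_symm]

end Induced2K2

theorem n13_nonempty_forces_empty_sets_general {V : Type*} (G : SimpleGraph V)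
    (hfree : FFree G) (v1 v2 v3 v4 : V) (h2K2 : Induced2K2 G v1 v2 v3 v4)
    (x : V)
    (hx1 : G.Adj x v1) (hx2 : ¬ G.Adj x v2) (hx3 : G.Adj x v3) (hx4 : ¬ G.Adj x v4) :
    ∀ y : V, y ∉ ({v1, v2, v3, v4} : Set V) →
      ¬ (G.Adj y v1 ∧ ¬ G.Adj y v2 ∧ ¬ G.Adj y v3 ∧ G.Adj y v4) ∧
      ¬ (¬ G.Adj y v1 ∧ G.Adj y v2 ∧ G.Adj y v3 ∧ ¬ G.Adj y v4) ∧
      ¬ (¬ G.Adj y v1 ∧ G.Adj y v2 ∧ ¬ G.Adj y v3 ∧ G.Adj y v4) ∧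
      ¬ (G.Adj y v1 ∧ G.Adj y v2 ∧ ¬ G.Adj y v3 ∧ G.Adj y v4) ∧
      ¬ (¬ G.Adj y v1 ∧ G.Adj y v2 ∧ G.Adj y v3 ∧ G.Adj y v4) := by
  obtain ⟨-, -, -, hC4, hC5, hC6⟩ := hfree
  intro y _
  exact ⟨h2K2.not_exactly_adj_v1_v4 hC4 hC5 hx1 hx3 hx4,
    fun ⟨h1, h2, h3, h4⟩ => h2K2.symm.not_exactly_adj_v1_v4 hC4 hC5 hx3 hx1 hx2 ⟨h3, h4, h1, h2⟩,
    h2K2.not_exactly_adj_v2_v4 hC4 hC6 hx1 hx2 hx3 hx4,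
    h2K2.not_exactly_adj_v1_v2_v4 hC4 hC5 hx1 hx3 hx4,
    fun ⟨h1, h2, h3, h4⟩ => h2K2.symm.not_exactly_adj_v1_v2_v4 hC4 hC5 hx3 hx1 hx2 ⟨h3, h4, h1, h2⟩⟩

theorem n13_nonempty_forces_empty_sets {V : Type*} (G : SimpleGraph V)
    (hfree : FFree G) (v1 v2 v3 v4 : V) (h2K2 : Induced2K2 G v1 v2 v3 v4)
    (x : V) (hx : x ∉ ({v1, v2, v3, v4} : Set V))
    (hx1 : G.Adj x v1) (hx2 : ¬ G.Adj x v2) (hx3 : G.Adj x v3) (hx4 : ¬ G.Adj x v4) :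
    ∀ y : V, y ∉ ({v1, v2, v3, v4} : Set V) →
      ¬ (G.Adj y v1 ∧ ¬ G.Adj y v2 ∧ ¬ G.Adj y v3 ∧ G.Adj y v4) ∧
      ¬ (¬ G.Adj y v1 ∧ G.Adj y v2 ∧ G.Adj y v3 ∧ ¬ G.Adj y v4) ∧
      ¬ (¬ G.Adj y v1 ∧ G.Adj y v2 ∧ ¬ G.Adj y v3 ∧ G.Adj y v4) ∧
      ¬ (G.Adj y v1 ∧ G.Adj y v2 ∧ ¬ G.Adj y v3 ∧ G.Adj y v4) ∧
      ¬ (¬ G.Adj y v1 ∧ G.Adj y v2 ∧ G.Adj y v3 ∧ G.Adj y v4) :=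
  n13_nonempty_forces_empty_sets_general G hfree v1 v2 v3 v4 h2K2 x hx1 hx2 hx3 hx4
end

section
/- Let G be a {2P3, P3+K3, 2K3, C4, C5, C6}-free graph containing an induced 2K2 on vertices {1,2,3,4} with edges 12 and 34. Then the set of vertices outside {1,2,3,4} whose neighborhood in {1,2,3,4} is one of {1,3}, {1,2,3}, {1,3,4}, {1,2,3,4} forms a clique. -/
open scoped Classical

theorem n13_union_is_clique {V : Type*} (G : SimpleGraph V)
    (hfree : FFree G) (v1 v2 v3 v4 : V) (h2K2 : Induced2K2 G v1 v2 v3 v4) :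
    G.IsClique {w : V | w ∉ ({v1, v2, v3, v4} : Set V) ∧ G.Adj w v1 ∧ G.Adj w v3} := by
  obtain ⟨h12, h13, h14, h23, h24, h34, a12, a34, n13, n14, n23, n24⟩ := h2K2
  intro u hu w hw hne
  by_contra hadj
  obtain ⟨_, _, _, hC4, _⟩ := hfree
  obtain ⟨hu1, au1, au3⟩ := hu
  obtain ⟨hw1, aw1, aw3⟩ := hw
  have e1 := au1.ne; have e1' := au1.ne'
  have e2 := au3.ne; have e2' := au3.ne'
  have e3 := aw1.ne; have e3' := aw1.ne'
  have e4 := aw3.ne; have e4' := aw3.ne'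
  apply hC4.false
  refine ⟨⟨![u, v1, w, v3], ?_⟩, ?_⟩
  · intro a b
    fin_cases a <;> fin_cases b <;>
      simp_all [G.adj_comm, G.ne_of_adj au1, G.ne_of_adj au3, G.ne_of_adj aw1,
        G.ne_of_adj aw3] <;> tauto
  · intro a b
    fin_cases a <;> fin_cases b <;>
      simp_all [cycle4, graphOfList, G.adj_comm] <;> tauto
end

section
/- Let G be a {2P3, P3+K3, 2K3, C4, C5, C6}-free graph containing an induced 2K2 on vertices {1,2,3,4} with edges 12 and 34. Let N_X denote the set of vertices outside {1,2,3,4} whose neighborhood within {1,2,3,4} equals X. Then every vertex of N_{1} ∪ N_{2} ∪ N_{12} is adjacent to every vertex of N_{3} ∪ N_{4} ∪ N_{34}. -/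
open scoped Classical

/-! If `x` and `y` were non-adjacent, `{x, v1, v2}` and `{y, v3, v4}` would each induce a `P3` or
a `K3`, with no edges between them: an induced `2P3`, `P3 + K3` or `2K3`. -/

section
variable {V : Type*} {G : SimpleGraph V} {a b c d e f : V}

lemma not_free_of_anticomplete_paths {H : SimpleGraph (Fin 6)}
    (hac : a ≠ c) (hab : G.Adj a b) (hbc : G.Adj b c)
    (hdf : d ≠ f) (hde : G.Adj d e) (hef : G.Adj e f)
    (hanti : ∀ u ∈ ({a, b, c} : Set V), ∀ w ∈ ({d, e, f} : Set V), ¬ G.Adj u w)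
    (h01 : H.Adj 0 1) (h12 : H.Adj 1 2) (h34 : H.Adj 3 4) (h45 : H.Adj 4 5)
    (h02 : H.Adj 0 2 ↔ G.Adj a c) (h35 : H.Adj 3 5 ↔ G.Adj d f)
    (hcross : ∀ i j : Fin 6, i < 3 → 3 ≤ j → ¬ H.Adj i j) : ¬ Free H G := by
  simp only [Set.mem_insert_iff, Set.mem_singleton_iff, forall_eq_or_imp, forall_eq] at hanti
  have hadj : ∀ i j : Fin 6,
      G.Adj (![a, b, c, d, e, f] i) (![a, b, c, d, e, f] j) ↔ H.Adj i j := by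
    intro i j
    fin_cases i <;> fin_cases j <;>
      simp [SimpleGraph.adj_comm, hab, hbc, hde, hef, hanti, h01.symm, h12, h34, h45,
        h02, h35, hcross]
  -- The two paths are disjoint because each of their vertices has a neighbour on its own path.
  have hinj : Function.Injective ![a, b, c, d, e, f] := by
    intro i j hij
    fin_cases i <;> fin_cases j <;> simp_all [SimpleGraph.adj_comm]
  exact fun hH => hH.false ⟨⟨_, hinj⟩, hadj _ _⟩

lemma FFree.false_of_anticomplete_paths (hG : FFree G)
    (hac : a ≠ c) (hab : G.Adj a b) (hbc : G.Adj b c)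
    (hdf : d ≠ f) (hde : G.Adj d e) (hef : G.Adj e f)
    (hanti : ∀ u ∈ ({a, b, c} : Set V), ∀ w ∈ ({d, e, f} : Set V), ¬ G.Adj u w) :
    False := by
  obtain ⟨h2P3, hP3K3, h2K3, -⟩ := hG
  have hanti' : ∀ w ∈ ({d, e, f} : Set V), ∀ u ∈ ({a, b, c} : Set V), ¬ G.Adj w u :=
    fun w hw u hu h => hanti u hu w hw h.symm
  by_cases hac' : G.Adj a c <;> by_cases hdf' : G.Adj d f
  · refine not_free_of_anticomplete_paths hac hab hbc hdf hde hef hanti ?_ ?_ ?_ ?_ ?_ ?_ ?_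
      h2K3 <;> simp +decide [twoK3, graphOfList, hac', hdf']
  -- `p3PlusK3` has its triangle on `{3, 4, 5}`, so the two paths trade places.
  · refine not_free_of_anticomplete_paths hdf hde hef hac hab hbc hanti' ?_ ?_ ?_ ?_ ?_ ?_ ?_
      hP3K3 <;> simp +decide [p3PlusK3, graphOfList, hac', hdf']
  · refine not_free_of_anticomplete_paths hac hab hbc hdf hde hef hanti ?_ ?_ ?_ ?_ ?_ ?_ ?_
      hP3K3 <;> simp +decide [p3PlusK3, graphOfList, hac', hdf']
  · refine not_free_of_anticomplete_paths hac hab hbc hdf hde hef hanti ?_ ?_ ?_ ?_ ?_ ?_ ?_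
      h2P3 <;> simp +decide [twoP3, graphOfList, hac', hdf']

lemma exists_path_of_adj_or_adj {u v w : V} (huv : G.Adj u v) (hw : G.Adj w u ∨ G.Adj w v)
    (hwu : w ≠ u) (hwv : w ≠ v) :
    ∃ a b c, a ≠ c ∧ G.Adj a b ∧ G.Adj b c ∧ ({a, b, c} : Set V) = {w, u, v} := by
  rcases hw with hwu' | hwv'
  · exact ⟨w, u, v, hwv, hwu', huv, rfl⟩
  · exact ⟨w, v, u, hwu, hwv', huv.symm, congrArg (insert w) (Set.pair_comm v u)⟩

end

theorem n12_complete_to_n34 {V : Type*} (G : SimpleGraph V)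
    (hfree : FFree G) (v1 v2 v3 v4 : V) (h2K2 : Induced2K2 G v1 v2 v3 v4) :
    ∀ x y : V, x ∉ ({v1, v2, v3, v4} : Set V) → y ∉ ({v1, v2, v3, v4} : Set V) →
      (G.Adj x v1 ∨ G.Adj x v2) → ¬ G.Adj x v3 → ¬ G.Adj x v4 →
      (G.Adj y v3 ∨ G.Adj y v4) → ¬ G.Adj y v1 → ¬ G.Adj y v2 →
      G.Adj x y := by
  intro x y hx hy hx12 hnx3 hnx4 hy34 hny1 hny2
  obtain ⟨-, -, -, -, -, -, h12, h34, hn13, hn14, hn23, hn24⟩ := h2K2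
  simp only [Set.mem_insert_iff, Set.mem_singleton_iff, not_or] at hx hy
  obtain ⟨a, b, c, hac, hab, hbc, habc⟩ := exists_path_of_adj_or_adj h12 hx12 hx.1 hx.2.1
  obtain ⟨d, e, f, hdf, hde, hef, hdef⟩ := exists_path_of_adj_or_adj h34 hy34 hy.2.2.1 hy.2.2.2
  by_contra hxy
  refine hfree.false_of_anticomplete_paths hac hab hbc hdf hde hef ?_
  rw [habc, hdef]
  simp [hxy, hnx3, hnx4, hn13, hn14, hn23, hn24, G.adj_comm v1 y, G.adj_comm v2 y, hny1,
    hny2]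
end

section
/- The path on nine vertices P9 is not a Maya-Tupi graph; consequently, every tree that is a Maya-Tupi graph has diameter at most 7. -/
open scoped Classical

def path9 : SimpleGraph (Fin 9) :=
  graphOfList 9 [(0,1),(1,2),(2,3),(3,4),(4,5),(5,6),(6,7),(7,8)]

/-!
Maya-Tupi graphs are closed under induced subgraphs, and the vertices of a shortest walk induce
a path, so a connected Maya-Tupi graph with two vertices at distance at least `8` would contain
an induced `P9`. That `P9` is not Maya-Tupi is a finite check; by hand: `B` contains no three
consecutive vertices, so `A` meets each of `{0,1,2}`, `{3,4,5}`, `{6,7,8}`, while the least vertex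
of `A` has at most one neighbour in `A`, so `|A| ≤ 3`. Hence `A` has one vertex in each block and
each of them needs a neighbour in `A`, forcing both `3` and `5` into `A`.
-/

open Finset

namespace SimpleGraph

instance {n : ℕ} : DecidableRel (pathGraph n).Adj := fun _ _ => decidable_of_iff' _ pathGraph_adj

namespace Walk

variable {V : Type*} {G : SimpleGraph V} {u v : V}

lemma dist_getVert_le (p : G.Walk u v) {i j : ℕ} (hij : i ≤ j) :
    G.dist (p.getVert i) (p.getVert j) ≤ j - i := by
  have hend : (p.drop i).getVert (j - i) = p.getVert j := by
    rw [drop_getVert, Nat.add_sub_cancel' hij]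
  calc G.dist (p.getVert i) (p.getVert j)
      ≤ (((p.drop i).take (j - i)).copy rfl hend).length := dist_le _
    _ ≤ j - i := by simp

variable (p : G.Walk u v) (hp : p.length = G.dist u v)
include hp

lemma dist_getVert_of_length_eq_dist {i j : ℕ} (hij : i ≤ j) (hj : j ≤ p.length) :
    G.dist (p.getVert i) (p.getVert j) = j - i := by
  refine le_antisymm (p.dist_getVert_le hij) ?_
  have hu := p.dist_getVert_le (Nat.zero_le i)
  have hv := p.dist_getVert_le hj
  rw [getVert_zero] at hu
  rw [getVert_length] at hv
  have := (p.take i).reachable.dist_triangle_left v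
  have := (p.drop j).reachable.dist_triangle_right (p.getVert i)
  omega

lemma getVert_inj_of_length_eq_dist {i j : ℕ} (hi : i ≤ p.length) (hj : j ≤ p.length)
    (h : p.getVert i = p.getVert j) : i = j := by
  wlog hij : i ≤ j generalizing i j
  · exact (this hj hi h.symm (by omega)).symm
  have := p.dist_getVert_of_length_eq_dist hp hij hj
  rw [h, dist_self] at this
  omega

lemma adj_getVert_iff_of_length_eq_dist {i j : ℕ} (hi : i ≤ p.length) (hj : j ≤ p.length) :
    G.Adj (p.getVert i) (p.getVert j) ↔ i + 1 = j ∨ j + 1 = i := by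
  wlog hij : i ≤ j generalizing i j
  · rw [adj_comm, this hj hi (by omega)]
    omega
  rw [← dist_eq_one_iff_adj, p.dist_getVert_of_length_eq_dist hp hij hj]
  omega

def pathGraphEmbeddingOfLengthEqDist (n : ℕ) (hn : n ≤ p.length) : pathGraph (n + 1) ↪g G where
  toFun i := p.getVert i
  inj' i j h := Fin.ext (p.getVert_inj_of_length_eq_dist hp (by omega) (by omega) h)
  map_rel_iff' {i j} := by
    rw [pathGraph_adj]
    exact p.adj_getVert_iff_of_length_eq_dist hp (by omega) (by omega)

end Walk

theorem Reachable.dist_lt_of_isEmpty_pathGraph_embedding {V : Type*} {G : SimpleGraph V}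
    {u v : V} {n : ℕ} (huv : G.Reachable u v) (hG : IsEmpty (pathGraph (n + 1) ↪g G)) :
    G.dist u v < n := by
  obtain ⟨p, hp⟩ := huv.exists_walk_length_eq_dist
  by_contra! hn
  exact hG.false (p.pathGraphEmbeddingOfLengthEqDist hp n (by omega))

end SimpleGraph

section MayaTupi

variable {V : Type*} [Fintype V] [DecidableEq V] (G : SimpleGraph V) [DecidableRel G.Adj]

omit [Fintype V] [DecidableEq V] in
lemma adjCount_eq_card_filter (S : Finset V) (v : V) :
    adjCount G S v = #{u ∈ S | G.Adj v u} := by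
  unfold adjCount
  congr 1
  exact filter_congr_decidable ..

-- `v` itself counts among its at most two non-neighbours in `A`.
lemma isMayaTupi_iff : IsMayaTupi G ↔ ∃ A : Finset V,
    (∀ v ∈ A, #{u ∈ A | ¬ G.Adj v u} ≤ 2) ∧ ∀ v ∈ Aᶜ, #{u ∈ Aᶜ | G.Adj v u} ≤ 1 := by
  have hcount (A : Finset V) (v : V) :
      #A - 2 ≤ #{u ∈ A | G.Adj v u} ↔ #{u ∈ A | ¬ G.Adj v u} ≤ 2 := by
    have := card_filter_add_card_filter_not (s := A) (p := fun u => G.Adj v u)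
    omega
  simp only [IsMayaTupi, adjCount_eq_card_filter, hcount]
  constructor
  · rintro ⟨A, B, hU, hD, hA, hB⟩
    obtain rfl : Aᶜ = B :=
      IsCompl.compl_eq ⟨hD, codisjoint_iff.2 (by rw [sup_eq_union, top_eq_univ]; convert hU)⟩
    exact ⟨A, hA, hB⟩
  · rintro ⟨A, hA, hB⟩
    exact ⟨A, Aᶜ, by convert union_compl A, disjoint_compl_right, hA, hB⟩

end MayaTupi

theorem IsMayaTupi.of_embedding {α V : Type*} [Fintype α] [Fintype V]
    {H : SimpleGraph α} {G : SimpleGraph V} (f : H ↪g G) (hG : IsMayaTupi G) : IsMayaTupi H := by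
  classical
  rw [isMayaTupi_iff] at hG ⊢
  obtain ⟨A, hA, hB⟩ := hG
  refine ⟨({a | f a ∈ A} : Finset α), fun v hv => ?_, fun v hv => ?_⟩
  · refine (card_le_card_of_injOn f (fun u hu => ?_) f.injective.injOn).trans
      (hA (f v) (by simpa using hv))
    simpa using hu
  · refine (card_le_card_of_injOn f (fun u hu => ?_) f.injective.injOn).trans
      (hB (f v) (by simpa using hv))
    simpa using hu

lemma path9_eq_pathGraph : path9 = SimpleGraph.pathGraph 9 := by
  ext i j
  simp only [path9, graphOfList, SimpleGraph.fromRel_adj, SimpleGraph.pathGraph_adj]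
  revert i j
  decide

lemma not_isMayaTupi_pathGraph_nine : ¬ IsMayaTupi (SimpleGraph.pathGraph 9) := by
  rw [isMayaTupi_iff]
  set_option maxRecDepth 10000 in decide

theorem p9_not_mayaTupi_and_tree_diameter_le_seven :
    ¬ IsMayaTupi path9 ∧
      ∀ (W : Type) [Fintype W] (G : SimpleGraph W), G.Connected → G.IsAcyclic →
        IsMayaTupi G → ∀ u v : W, G.dist u v ≤ 7 := by
  refine ⟨path9_eq_pathGraph ▸ not_isMayaTupi_pathGraph_nine, fun W _ G hG _ hMT u v => ?_⟩
  have hP9 : IsEmpty (SimpleGraph.pathGraph 9 ↪g G) :=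
    ⟨fun f => not_isMayaTupi_pathGraph_nine (hMT.of_embedding f)⟩
  exact Nat.le_of_lt_succ ((hG.preconnected u v).dist_lt_of_isEmpty_pathGraph_embedding hP9)
end
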